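/- arXiv:1810.06844 — 6 statements merged into one kernel-verified Lean document; each statement's English description precedes it below -/
import Mathlib

section
/- Let G be a simple chordal graph with no cut edges (bridges) in which every vertex has degree at least 2. Then every vertex of G lies in a triangle, i.e., for every vertex v there exist vertices u and w such that {u,v}, {v,w}, and {u,w} are all edges of G. -/
/-- `G` is chordal: every cycle of length at least four has a chord, i.e. an edge
of `G` joining two vertices of the cycle that is not an edge of the cycle. -/
def SimpleGraph.IsChordal {V : Type*} (G : SimpleGraph V) : Prop :=
  ∀ (v : V) (c : G.Walk v v), c.IsCycle → 4 ≤ c.length →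
    ∃ u w : V, u ∈ c.support ∧ w ∈ c.support ∧ G.Adj u w ∧ s(u, w) ∉ c.edges

/-!
A chord `xy` of a cycle `C` splits `C` into two shorter cycles, each consisting of `xy` and one of
the two arcs of `C` between `x` and `y`; every vertex of `C` lies on one of them. In a chordal
graph we may therefore shrink any cycle through `v` until it is a triangle. Finally, every vertex
`v` has a neighbour `w`, and since `vw` is not a bridge it lies on a cycle, which passes through `v`.
-/

namespace SimpleGraph

variable {V : Type*} {G : SimpleGraph V}

namespace Walk

theorem exists_triangle_of_length_eq_three {u v : V} {c : G.Walk u u} (hc : c.length = 3)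
    (hv : v ∈ c.support) : ∃ a b : V, G.Adj a v ∧ G.Adj v b ∧ G.Adj a b := by
  classical
  have hlen : (c.rotate v hv).length = 3 := by rw [length_rotate, hc]
  generalize c.rotate v hv = c' at hlen
  match c', hlen with
  | .cons h₁ (.cons h₂ (.cons h₃ .nil)), _ => exact ⟨_, _, h₃, h₁, h₂.symm⟩

theorem IsCycle.exists_shorter_of_chord_from_start {u v y : V} {c : G.Walk u u}
    (hc : c.IsCycle) (hy : y ∈ c.support) (hadj : G.Adj u y) (hchord : s(u, y) ∉ c.edges)
    (hv : v ∈ c.support) :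
    ∃ (w : V) (c' : G.Walk w w), c'.IsCycle ∧ v ∈ c'.support ∧ c'.length < c.length := by
  classical
  set p := c.takeUntil y hy
  set q := c.dropUntil y hy
  have hspec : p.append q = c := c.take_spec hy
  have hlen : c.length = p.length + q.length := by rw [← hspec, length_append]
  have hedges : c.edges = p.edges ++ q.edges := by rw [← hspec, edges_append]
  have hpath_p : p.IsPath := hc.isPath_takeUntil hy
  have hpath_q : q.IsPath :=
    IsCycle.isPath_of_append_right (not_nil_of_ne hadj.ne) (hspec ▸ hc)
  have hcyc_p : (cons hadj.symm p).IsCycle := by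
    rw [cons_isCycle_iff, Sym2.eq_swap]
    exact ⟨hpath_p, fun h => hchord (hedges ▸ List.mem_append_left _ h)⟩
  have hcyc_q : (cons hadj q).IsCycle := by
    rw [cons_isCycle_iff]
    exact ⟨hpath_q, fun h => hchord (hedges ▸ List.mem_append_right _ h)⟩
  -- each arc has length at least 2, since together with the chord it closes up a cycle
  have hp₃ := hcyc_p.three_le_length
  have hq₃ := hcyc_q.three_le_length
  simp only [length_cons] at hp₃ hq₃
  rw [← hspec, mem_support_append_iff] at hv
  rcases hv with hv | hv
  · exact ⟨y, _, hcyc_p, List.mem_cons_of_mem _ hv, by simp only [length_cons]; omega⟩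
  · exact ⟨u, _, hcyc_q, List.mem_cons_of_mem _ hv, by simp only [length_cons]; omega⟩

theorem IsCycle.exists_shorter_of_chord {u v x y : V} {c : G.Walk u u} (hc : c.IsCycle)
    (hx : x ∈ c.support) (hy : y ∈ c.support) (hadj : G.Adj x y) (hchord : s(x, y) ∉ c.edges)
    (hv : v ∈ c.support) :
    ∃ (w : V) (c' : G.Walk w w), c'.IsCycle ∧ v ∈ c'.support ∧ c'.length < c.length := by
  classical
  rw [← length_rotate c x hx]
  refine (hc.rotate hx).exists_shorter_of_chord_from_start ((mem_support_rotate_iff ..).2 hy)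
    hadj ?_ ((mem_support_rotate_iff ..).2 hv)
  rwa [(c.rotate_edges x hx).perm.mem_iff]

end Walk

theorem IsChordal.exists_triangle_of_mem_support (hG : G.IsChordal) {u v : V} {c : G.Walk u u}
    (hc : c.IsCycle) (hv : v ∈ c.support) : ∃ a b : V, G.Adj a v ∧ G.Adj v b ∧ G.Adj a b := by
  induction h : c.length using Nat.strong_induction_on generalizing u c with
  | _ n ih =>
    by_cases h₄ : 4 ≤ c.length
    · obtain ⟨x, y, hx, hy, hadj, hchord⟩ := hG u c hc h₄
      obtain ⟨w, c', hc', hv', hlt⟩ := hc.exists_shorter_of_chord hx hy hadj hchord hv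
      exact ih _ (h ▸ hlt) hc' hv' rfl
    · exact Walk.exists_triangle_of_length_eq_three (by have := hc.three_le_length; omega) hv

end SimpleGraph

theorem stmt0_general {V : Type*} [Fintype V] (G : SimpleGraph V)
    [DecidableRel G.Adj]
    (hchordal : G.IsChordal)
    (hbridge : ∀ e : Sym2 V, ¬ G.IsBridge e)
    (hdeg : ∀ v : V, 2 ≤ G.degree v) :
    ∀ v : V, ∃ u w : V, G.Adj u v ∧ G.Adj v w ∧ G.Adj u w := by
  intro v
  obtain ⟨w, hvw⟩ := G.degree_pos_iff_exists_adj v |>.1 (by linarith [hdeg v])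
  have hcycle := hbridge s(v, w)
  rw [SimpleGraph.isBridge_iff_forall_cycle_notMem hvw] at hcycle
  push Not at hcycle
  obtain ⟨u, c, hc, hvw_mem⟩ := hcycle
  exact hchordal.exists_triangle_of_mem_support hc (c.fst_mem_support_of_mem_edges hvw_mem)

theorem stmt0 {V : Type*} [Fintype V] [DecidableEq V] (G : SimpleGraph V)
    [DecidableRel G.Adj]
    (hchordal : G.IsChordal)
    (hbridge : ∀ e : Sym2 V, ¬ G.IsBridge e)
    (hdeg : ∀ v : V, 2 ≤ G.degree v) :
    ∀ v : V, ∃ u w : V, G.Adj u v ∧ G.Adj v w ∧ G.Adj u w :=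
  stmt0_general G hchordal hbridge hdeg
end

section
/- Let N be a connected simple graph with leaf set X (vertices of degree 1) where |X| >= 2. Suppose there exist two leaves x and y with neighbors u and v respectively such that {u,v} is an edge of N and there is a path in N from u to v visiting all non-leaf vertices of N exactly once. Then N is treebased, i.e., N has a spanning tree whose set of degree-1 vertices equals X. -/
/-!
The spanning tree consists of the path `x, u, …, v, y` together with every edge at a leaf. It is
connected because every non-leaf lies on the path. It is acyclic because a vertex of degree one
in a graph lies on no cycle, so a cycle would have to run inside the path. Leaves keep their unique
edge, while every other vertex is an inner vertex of the path and keeps its two path neighbours.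
-/

namespace SimpleGraph

variable {V : Type*} {G H : SimpleGraph V}

lemma ncard_neighborSet_eq_degree [G.LocallyFinite] (v : V) :
    (G.neighborSet v).ncard = G.degree v := by
  rw [Set.ncard_eq_toFinset_card', ← card_neighborFinset_eq_degree, neighborFinset]

lemma Reachable.of_forall_adj_reachable (h : ∀ a b, G.Adj a b → H.Reachable a b) {u v : V}
    (huv : G.Reachable u v) : H.Reachable u v := by
  obtain ⟨p⟩ := huv
  induction p with
  | nil => rfl
  | cons hab _ ih => exact (h _ _ hab).trans ih

lemma Connected.of_forall_adj_reachable (hG : G.Connected)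
    (h : ∀ a b, G.Adj a b → H.Reachable a b) : H.Connected :=
  (connected_iff H).mpr ⟨fun a b => (hG a b).of_forall_adj_reachable h, hG.nonempty⟩

/-- Each vertex of a cycle has two neighbours on it, so a cycle only uses edges of `H`. -/
theorem IsAcyclic.of_forall_adj (hH : H.IsAcyclic)
    (h : ∀ a b, G.Adj a b →
      H.Adj a b ∨ (G.neighborSet a).Subsingleton ∨ (G.neighborSet b).Subsingleton) :
    G.IsAcyclic := by
  intro w c hc
  have hcycle : ∀ a ∈ c.support, ¬ (G.neighborSet a).Subsingleton := fun a ha hsub => by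
    have hc2 := hc.ncard_neighborSet_toSubgraph_eq_two ha
    have hcsub : (c.toSubgraph.neighborSet a).Subsingleton :=
      hsub.anti fun b hb => c.toSubgraph.adj_sub hb
    rcases hcsub.eq_empty_or_singleton with hempty | ⟨b, hb⟩
    · simp [hempty] at hc2
    · simp [hb] at hc2
  have hedges : ∀ e ∈ c.edges, e ∈ H.edgeSet := by
    intro e he
    induction e using Sym2.ind with | _ a b => ?_
    rcases h a b (c.adj_of_mem_edges he) with hab | ha | hb
    · exact hab
    · exact absurd ha (hcycle a (c.fst_mem_support_of_mem_edges he))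
    · exact absurd hb (hcycle b (c.snd_mem_support_of_mem_edges he))
  exact hH (c.transfer H hedges) (hc.transfer hedges)

namespace Walk

theorem IsPath.isAcyclic_spanningCoe_toSubgraph {u v : V} {p : G.Walk u v} (hp : p.IsPath) :
    p.toSubgraph.spanningCoe.IsAcyclic := by
  induction p with
  | nil =>
    rw [show (Walk.nil : G.Walk _ _).toSubgraph.spanningCoe = ⊥ by ext; simp]
    exact isAcyclic_bot
  | cons h q ih =>
    rw [cons_isPath_iff] at hp
    rw [Walk.toSubgraph, Subgraph.sup_spanningCoe, Subgraph.spanningCoe_subgraphOfAdj, sup_comm]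
    refine (ih hp.1).sup_edge_of_not_reachable fun ⟨r⟩ => ?_
    cases r with
    | nil => exact h.ne rfl
    | cons had _ => exact hp.2 (q.mem_support_of_adj_toSubgraph had)

theorem IsPath.ncard_neighborSet_toSubgraph_eq_two {u v w : V} {p : G.Walk u v} (hp : p.IsPath)
    (hw : w ∈ p.support) (hwu : w ≠ u) (hwv : w ≠ v) :
    (p.toSubgraph.neighborSet w).ncard = 2 := by
  obtain ⟨i, rfl, hi⟩ := mem_support_iff_exists_getVert.mp hw
  refine hp.ncard_neighborSet_toSubgraph_internal_eq_two ?_ ?_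
  · rintro rfl
    exact hwu p.getVert_zero
  · exact lt_of_le_of_ne hi fun h => hwv (h ▸ p.getVert_length)

theorem reachable_spanningCoe_toSubgraph {u v a b : V} (p : G.Walk u v) (ha : a ∈ p.support)
    (hb : b ∈ p.support) : p.toSubgraph.spanningCoe.Reachable a b :=
  (p.toSubgraph_connected ⟨a, p.mem_verts_toSubgraph.mpr ha⟩ ⟨b, p.mem_verts_toSubgraph.mpr hb⟩).map
    p.toSubgraph.coeEmbeddingSpanningCoe.toHom

end Walk

def pendantEdgeGraph (G : SimpleGraph V) [G.LocallyFinite] : SimpleGraph V where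
  Adj a b := G.Adj a b ∧ (G.degree a = 1 ∨ G.degree b = 1)
  symm := ⟨fun _ _ h => ⟨h.1.symm, h.2.symm⟩⟩
  loopless := ⟨fun _ h => h.1.ne rfl⟩

section Pendant

variable [G.LocallyFinite]

lemma pendantEdgeGraph_le : G.pendantEdgeGraph ≤ G := fun _ _ h => h.1

lemma neighborSet_sup_pendantEdgeGraph (hH : H ≤ G) {w : V} (hw : G.degree w = 1) :
    (H ⊔ G.pendantEdgeGraph).neighborSet w = G.neighborSet w :=
  Set.Subset.antisymm (fun _ hb => sup_le hH pendantEdgeGraph_le hb)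
    fun _ hb => Or.inr ⟨hb, Or.inl hw⟩

lemma subsingleton_neighborSet_of_degree_eq_one {w : V} (hw : G.degree w = 1) :
    (G.neighborSet w).Subsingleton := by
  obtain ⟨a, ha⟩ := Set.ncard_eq_one.mp ((ncard_neighborSet_eq_degree w).trans hw)
  exact ha ▸ Set.subsingleton_singleton

end Pendant

def IsTreeBased (G : SimpleGraph V) [G.LocallyFinite] : Prop :=
  ∃ T ≤ G, T.Connected ∧ T.IsAcyclic ∧ ∀ w, (T.neighborSet w).ncard = 1 ↔ G.degree w = 1

theorem IsTreeBased.of_isPath [G.LocallyFinite] (hG : G.Connected) {x y : V} {q : G.Walk x y}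
    (hq : q.IsPath) (hx : G.degree x = 1) (hy : G.degree y = 1)
    (hsupp : ∀ w, G.degree w ≠ 1 → w ∈ q.support) : G.IsTreeBased := by
  set P := q.toSubgraph.spanningCoe
  have hP : P ≤ G := q.toSubgraph.spanningCoe_le
  have hT : P ⊔ G.pendantEdgeGraph ≤ G := sup_le hP pendantEdgeGraph_le
  refine ⟨P ⊔ G.pendantEdgeGraph, hT, ?_, ?_, fun w => ?_⟩
  · refine hG.of_forall_adj_reachable fun a b hab => ?_
    by_cases hleaf : G.degree a = 1 ∨ G.degree b = 1
    · exact Adj.reachable (Or.inr ⟨hab, hleaf⟩)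
    · obtain ⟨ha, hb⟩ := not_or.mp hleaf
      exact (q.reachable_spanningCoe_toSubgraph (hsupp a ha) (hsupp b hb)).mono le_sup_left
  · refine hq.isAcyclic_spanningCoe_toSubgraph.of_forall_adj fun a b hab => ?_
    rcases hab with hab | ⟨-, ha | hb⟩
    · exact Or.inl hab
    · rw [neighborSet_sup_pendantEdgeGraph hP ha]
      exact Or.inr (Or.inl (subsingleton_neighborSet_of_degree_eq_one ha))
    · rw [neighborSet_sup_pendantEdgeGraph hP hb]
      exact Or.inr (Or.inr (subsingleton_neighborSet_of_degree_eq_one hb))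
  · by_cases hw : G.degree w = 1
    · rw [neighborSet_sup_pendantEdgeGraph hP hw, ncard_neighborSet_eq_degree]
    · have hq2 := hq.ncard_neighborSet_toSubgraph_eq_two (hsupp w hw)
        (by rintro rfl; exact hw hx) (by rintro rfl; exact hw hy)
      have : 2 ≤ ((P ⊔ G.pendantEdgeGraph).neighborSet w).ncard :=
        hq2 ▸ Set.ncard_le_ncard (fun _ hb => Or.inl hb)
          ((G.neighborSet w).toFinite.subset fun _ hb => hT hb)
      omega

end SimpleGraph

open SimpleGraph Walk

theorem stmt7_general {V : Type*} [Fintype V] (N : SimpleGraph V)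
    [DecidableRel N.Adj]
    (hconn : N.Connected)
    (x y u v : V) (hx : N.degree x = 1) (hy : N.degree y = 1) (hxy : x ≠ y)
    (hux : N.Adj u x) (hvy : N.Adj v y)
    (p : N.Walk u v) (hp : p.IsPath)
    (hsupp : ∀ w : V, w ∈ p.support ↔ N.degree w ≠ 1) :
    ∃ T : SimpleGraph V, T ≤ N ∧ T.Connected ∧ T.IsAcyclic ∧
      ∀ w : V, ((T.neighborSet w).ncard = 1 ↔ N.degree w = 1) := by
  have hxp : x ∉ p.support := fun h => (hsupp x).mp h hx
  have hyp : y ∉ p.support := fun h => (hsupp y).mp h hy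
  have hq : (cons hux.symm (p.concat hvy)).IsPath := by
    refine (hp.concat hyp hvy).cons ?_
    rw [support_concat, List.mem_append, List.mem_singleton]
    rintro (h | rfl)
    · exact hxp h
    · exact hxy rfl
  exact IsTreeBased.of_isPath hconn hq hx hy fun w hw => by
    simp [support_concat, (hsupp w).mpr hw]

theorem stmt7 {V : Type*} [Fintype V] [DecidableEq V] (N : SimpleGraph V)
    [DecidableRel N.Adj]
    (hconn : N.Connected)
    (hX : 2 ≤ {v : V | N.degree v = 1}.ncard)
    (x y u v : V) (hx : N.degree x = 1) (hy : N.degree y = 1) (hxy : x ≠ y)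
    (hux : N.Adj u x) (hvy : N.Adj v y) (huv : N.Adj u v)
    (p : N.Walk u v) (hp : p.IsPath)
    (hsupp : ∀ w : V, w ∈ p.support ↔ N.degree w ≠ 1) :
    ∃ T : SimpleGraph V, T ≤ N ∧ T.Connected ∧ T.IsAcyclic ∧
      ∀ w : V, ((T.neighborSet w).ncard = 1 ↔ N.degree w = 1) :=
  stmt7_general N hconn x y u v hx hy hxy hux hvy p hp hsupp
end

section
/- Let G be a connected graph (possibly with parallel edges and loops) that can be reduced to K2 by a sequence of operations: deleting a leaf with its incident edge, suppressing a degree-2 vertex, deleting a copy of a parallel edge, or deleting a loop. If G' is obtained from G by deleting one loop, then G' can also be reduced to K2 by such operations. Conversely, if G' can be reduced to K2, so can G. -/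
/-- A finite multigraph (loops and parallel edges allowed) on vertex type `V`. -/
structure MGraph (V : Type) [DecidableEq V] where
  verts : Finset V
  edges : Multiset (Sym2 V)

namespace MGraph

variable {V : Type} [DecidableEq V]

/-- All endpoints of edges are vertices. -/
def Good (G : MGraph V) : Prop := ∀ e ∈ G.edges, ∀ v ∈ e, v ∈ G.verts

/-- Degree of a vertex: loops count twice. -/
def degree (G : MGraph V) (v : V) : ℕ :=
  (G.edges.map fun e => if e = s(v, v) then 2 else if v ∈ e then 1 else 0).sum

def Adj (G : MGraph V) (u v : V) : Prop := s(u, v) ∈ G.edges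

def ConnectedM (G : MGraph V) : Prop :=
  G.verts.Nonempty ∧ ∀ u ∈ G.verts, ∀ v ∈ G.verts, Relation.ReflTransGen G.Adj u v

/-- The restriction operations of Algorithm 1: delete a leaf, suppress a degree-2
vertex (both only allowed while more than 2 vertices remain), delete one copy of a
parallel (non-loop) edge, delete a loop. -/
inductive Step : MGraph V → MGraph V → Prop
  | deleteLeaf (G : MGraph V) (v : V) (e : Sym2 V) :
      2 < G.verts.card → v ∈ G.verts → G.degree v = 1 → e ∈ G.edges → v ∈ e →
      Step G ⟨G.verts.erase v, G.edges.erase e⟩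
  | suppress (G : MGraph V) (v u w : V) (rest : Multiset (Sym2 V)) :
      2 < G.verts.card → v ∈ G.verts → G.degree v = 2 → u ≠ v → w ≠ v →
      G.edges = s(u, v) ::ₘ s(v, w) ::ₘ rest →
      Step G ⟨G.verts.erase v, s(u, w) ::ₘ rest⟩
  | deleteParallel (G : MGraph V) (e : Sym2 V) :
      ¬ e.IsDiag → 2 ≤ G.edges.count e →
      Step G ⟨G.verts, G.edges.erase e⟩
  | deleteLoop (G : MGraph V) (v : V) :
      s(v, v) ∈ G.edges →
      Step G ⟨G.verts, G.edges.erase s(v, v)⟩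

/-- The same operations but without loop deletion (GSP reduction). -/
inductive StepGSP : MGraph V → MGraph V → Prop
  | deleteLeaf (G : MGraph V) (v : V) (e : Sym2 V) :
      2 < G.verts.card → v ∈ G.verts → G.degree v = 1 → e ∈ G.edges → v ∈ e →
      StepGSP G ⟨G.verts.erase v, G.edges.erase e⟩
  | suppress (G : MGraph V) (v u w : V) (rest : Multiset (Sym2 V)) :
      2 < G.verts.card → v ∈ G.verts → G.degree v = 2 → u ≠ v → w ≠ v →
      G.edges = s(u, v) ::ₘ s(v, w) ::ₘ rest →
      StepGSP G ⟨G.verts.erase v, s(u, w) ::ₘ rest⟩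
  | deleteParallel (G : MGraph V) (e : Sym2 V) :
      ¬ e.IsDiag → 2 ≤ G.edges.count e →
      StepGSP G ⟨G.verts, G.edges.erase e⟩

/-- Only series (suppression) and parallel (parallel-edge deletion) reductions. -/
inductive StepSP : MGraph V → MGraph V → Prop
  | suppress (G : MGraph V) (v u w : V) (rest : Multiset (Sym2 V)) :
      2 < G.verts.card → v ∈ G.verts → G.degree v = 2 → u ≠ v → w ≠ v →
      G.edges = s(u, v) ::ₘ s(v, w) ::ₘ rest →
      StepSP G ⟨G.verts.erase v, s(u, w) ::ₘ rest⟩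
  | deleteParallel (G : MGraph V) (e : Sym2 V) :
      ¬ e.IsDiag → 2 ≤ G.edges.count e →
      StepSP G ⟨G.verts, G.edges.erase e⟩

/-- Being the graph `K2`: two vertices joined by a single edge. -/
def IsK2 (G : MGraph V) : Prop :=
  ∃ u v : V, u ≠ v ∧ G.verts = {u, v} ∧ G.edges = {s(u, v)}

/-- `G` has `K2` as a restricted topological subgraph. -/
def Reduces (G : MGraph V) : Prop :=
  ∃ H : MGraph V, Relation.ReflTransGen Step G H ∧ IsK2 H

def ReducesGSP (G : MGraph V) : Prop :=
  ∃ H : MGraph V, Relation.ReflTransGen StepGSP G H ∧ IsK2 H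

def ReducesSP (G : MGraph V) : Prop :=
  ∃ H : MGraph V, Relation.ReflTransGen StepSP G H ∧ IsK2 H

end MGraph

/-- The multigraph associated to a finite simple graph. -/
noncomputable def SimpleGraph.toMGraph {V : Type} [DecidableEq V] [Fintype V]
    (G : SimpleGraph V) : MGraph V :=
  ⟨Finset.univ, (Set.toFinite G.edgeSet).toFinset.val⟩

/-- A finite simple graph is edgebased if its multigraph reduces to `K2`. -/
noncomputable def SimpleGraph.Edgebased {V : Type} [DecidableEq V] [Fintype V]
    (G : SimpleGraph V) : Prop :=
  G.toMGraph.Reduces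

namespace MGraph

variable {V : Type} [DecidableEq V]

lemma degree_cons' (A : Finset V) (e : Sym2 V) (s : Multiset (Sym2 V)) (w : V) :
    degree ⟨A, e ::ₘ s⟩ w
      = (if e = s(w, w) then 2 else if w ∈ e then 1 else 0) + degree ⟨A, s⟩ w := by
  simp [degree]

lemma two_le_degree_of_loop {A : Finset V} {s : Multiset (Sym2 V)} {v : V}
    (h : s(v, v) ∈ s) : 2 ≤ degree ⟨A, s⟩ v := by
  rw [← Multiset.cons_erase h, degree_cons']
  simp

lemma degree_erase_loop {A : Finset V} {s : Multiset (Sym2 V)} {v w : V}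
    (h : s(v, v) ∈ s) (hw : w ≠ v) :
    degree ⟨A, s.erase s(v, v)⟩ w = degree ⟨A, s⟩ w := by
  conv_rhs => rw [← Multiset.cons_erase h, degree_cons']
  have h1 : s(v, v) ≠ s(w, w) := by
    simp only [ne_eq, Sym2.eq_iff]
    rintro (⟨h, _⟩ | ⟨h, _⟩) <;> exact hw h.symm
  have h2 : w ∉ s(v, v) := by simp [Sym2.mem_iff, hw]
  simp [h1, h2]

lemma erase_cons_of_mem {α : Type*} [DecidableEq α] (a b : α) (s : Multiset α)
    (h : b ∈ s) : (a ::ₘ s).erase b = a ::ₘ s.erase b := by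
  by_cases hab : a = b
  · subst hab
    rw [Multiset.erase_cons_head]
    exact (Multiset.cons_erase h).symm
  · exact Multiset.erase_cons_tail s hab

lemma key_loop {H : MGraph V} (hK2 : H.IsK2) :
    ∀ {G : MGraph V}, Relation.ReflTransGen Step G H →
      ∀ v : V, s(v, v) ∈ G.edges →
        Reduces (⟨G.verts, G.edges.erase s(v, v)⟩ : MGraph V) := by
  intro G h
  induction h using Relation.ReflTransGen.head_induction_on with
  | refl =>
    intro v hv
    obtain ⟨u, w, huw, hverts, hedges⟩ := hK2
    rw [hedges] at hv
    simp only [Multiset.mem_singleton] at hv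
    rw [Sym2.eq_iff] at hv
    rcases hv with ⟨rfl, rfl⟩ | ⟨rfl, rfl⟩ <;> exact absurd rfl huw
  | head hstep hrest ih =>
    intro v hv
    rename_i G c
    cases hstep with
    | deleteLeaf w e h2 hwv hdeg he hwe =>
      have hwne : w ≠ v := by
        rintro rfl
        have h2' : 2 ≤ G.degree w := two_le_degree_of_loop (A := G.verts) hv
        omega
      have hev : s(v, v) ≠ e := by
        rintro rfl
        rw [Sym2.mem_iff] at hwe
        exact hwne (hwe.elim id id)
      have hv' : s(v, v) ∈ G.edges.erase e := (Multiset.mem_erase_of_ne hev).2 hv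
      obtain ⟨H', p, k⟩ := ih v hv'
      have hst := Step.deleteLeaf ⟨G.verts, G.edges.erase s(v, v)⟩ w e h2 hwv
        (by rw [degree_erase_loop hv hwne]; exact hdeg)
        ((Multiset.mem_erase_of_ne (Ne.symm hev)).2 he) hwe
      have p' : Relation.ReflTransGen Step
          ⟨G.verts.erase w, (G.edges.erase s(v,v)).erase e⟩ H' := by
        rw [show ((G.edges.erase s(v,v)).erase e) = ((G.edges.erase e).erase s(v,v)) from
          Multiset.erase_comm _ _ _]
        exact p
      exact ⟨H', p'.head hst, k⟩
    | suppress v₀ u w rest h2 hv₀ hdeg hu hw hedges =>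
      have hne1 : s(v, v) ≠ s(u, v₀) := by
        intro h; rw [Sym2.eq_iff] at h
        rcases h with ⟨rfl, rfl⟩ | ⟨rfl, rfl⟩ <;> exact hu rfl
      have hne2 : s(v, v) ≠ s(v₀, w) := by
        intro h; rw [Sym2.eq_iff] at h
        rcases h with ⟨h1, h2'⟩ | ⟨h1, h2'⟩
        · exact hw (h2'.symm.trans h1)
        · exact hw (h1.symm.trans h2')
      have hrest : s(v, v) ∈ rest := by
        rw [hedges, Multiset.mem_cons, Multiset.mem_cons] at hv
        tauto
      have hv₀v : v₀ ≠ v := by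
        rintro rfl
        have h4 : 4 ≤ G.degree v₀ := by
          show 4 ≤ degree ⟨G.verts, G.edges⟩ v₀
          rw [hedges, degree_cons', degree_cons']
          have := two_le_degree_of_loop (A := G.verts) (s := rest) hrest
          have e1 : ¬ (s(u, v₀) = s(v₀, v₀)) := by
            intro h; rw [Sym2.eq_iff] at h
            rcases h with ⟨h', _⟩ | ⟨h', _⟩ <;> exact hu h'
          have e2 : ¬ (s(v₀, w) = s(v₀, v₀)) := by
            intro h; rw [Sym2.eq_iff] at h
            rcases h with ⟨_, h'⟩ | ⟨_, h'⟩ <;> exact hw h'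
          have m1 : v₀ ∈ s(u, v₀) := by simp
          have m2 : v₀ ∈ s(v₀, w) := by simp
          simp only [e1, e2, m1, m2, if_false, if_true, if_neg, if_pos]
          omega
        omega
      have hcedge : s(v, v) ∈ (s(u, w) ::ₘ rest) := Multiset.mem_cons_of_mem hrest
      obtain ⟨H', p, k⟩ := ih v hcedge
      have hedges' : (⟨G.verts, G.edges.erase s(v,v)⟩ : MGraph V).edges
          = s(u, v₀) ::ₘ s(v₀, w) ::ₘ (rest.erase s(v, v)) := by
        show G.edges.erase s(v,v) = _
        rw [hedges, erase_cons_of_mem _ _ _ (Multiset.mem_cons_of_mem hrest),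
          erase_cons_of_mem _ _ _ hrest]
      have hst := Step.suppress ⟨G.verts, G.edges.erase s(v,v)⟩ v₀ u w
        (rest.erase s(v, v)) h2 hv₀
        (by rw [show MGraph.degree ⟨G.verts, G.edges.erase s(v,v)⟩ v₀
              = MGraph.degree ⟨G.verts, (G.edges.erase s(v,v))⟩ v₀ from rfl,
            degree_erase_loop hv hv₀v]; exact hdeg)
        hu hw hedges'
      have p' : Relation.ReflTransGen Step
          ⟨G.verts.erase v₀, s(u, w) ::ₘ rest.erase s(v, v)⟩ H' := by
        rw [show (s(u, w) ::ₘ rest.erase s(v, v)) = ((s(u, w) ::ₘ rest).erase s(v, v)) from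
          (erase_cons_of_mem _ _ _ hrest).symm]
        exact p
      exact ⟨H', p'.head hst, k⟩
    | deleteParallel e hdiag hcount =>
      have hev : s(v, v) ≠ e := by
        rintro rfl
        exact hdiag (Sym2.mk_isDiag_iff.2 rfl)
      have hv' : s(v, v) ∈ G.edges.erase e := (Multiset.mem_erase_of_ne hev).2 hv
      obtain ⟨H', p, k⟩ := ih v hv'
      have hst := Step.deleteParallel ⟨G.verts, G.edges.erase s(v,v)⟩ e hdiag
        (by rwa [show (⟨G.verts, G.edges.erase s(v,v)⟩ : MGraph V).edges
            = G.edges.erase s(v,v) from rfl,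
          Multiset.count_erase_of_ne (Ne.symm hev)])
      have p' : Relation.ReflTransGen Step
          ⟨G.verts, (G.edges.erase s(v,v)).erase e⟩ H' := by
        rw [show ((G.edges.erase s(v,v)).erase e) = ((G.edges.erase e).erase s(v,v)) from
          Multiset.erase_comm _ _ _]
        exact p
      exact ⟨H', p'.head hst, k⟩
    | deleteLoop w hwl =>
      by_cases hwveq : s(w, w) = s(v, v)
      · rw [hwveq] at hrest
        exact ⟨H, hrest, hK2⟩
      · have hv' : s(v, v) ∈ G.edges.erase s(w, w) :=
          (Multiset.mem_erase_of_ne (Ne.symm hwveq)).2 hv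
        obtain ⟨H', p, k⟩ := ih v hv'
        have hst := Step.deleteLoop ⟨G.verts, G.edges.erase s(v,v)⟩ w
          ((Multiset.mem_erase_of_ne hwveq).2 hwl)
        have p' : Relation.ReflTransGen Step
            ⟨G.verts, (G.edges.erase s(v,v)).erase s(w,w)⟩ H' := by
          rw [show ((G.edges.erase s(v,v)).erase s(w,w))
              = ((G.edges.erase s(w,w)).erase s(v,v)) from Multiset.erase_comm _ _ _]
          exact p
        exact ⟨H', p'.head hst, k⟩

end MGraph

theorem stmt9 {V : Type} [DecidableEq V] (G G' : MGraph V) (v : V)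
    (hgood : G.Good) (hconn : G.ConnectedM)
    (hloop : s(v, v) ∈ G.edges)
    (hG' : G' = ⟨G.verts, G.edges.erase s(v, v)⟩) :
    G.Reduces ↔ G'.Reduces := by
  subst hG'
  constructor
  · rintro ⟨H, p, hK2⟩
    exact MGraph.key_loop hK2 p v hloop
  · rintro ⟨H, p, hK2⟩
    exact ⟨H, Relation.ReflTransGen.head (MGraph.Step.deleteLoop G v hloop) p, hK2⟩
end

section
/- Let N be a proper unrooted phylogenetic network with at least two leaves that is binary (every internal vertex has degree 3) and chordal. Then N is edgebased. -/
/-- A network is proper if removal of any cut edge or any cut vertex leaves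
connected components each containing at least one leaf (degree-1 vertex). -/
def SimpleGraph.Proper {V : Type} (G : SimpleGraph V) : Prop :=
  (∀ e : Sym2 V, G.IsBridge e → ∀ w : V, ∃ u : V,
      (G.neighborSet u).ncard = 1 ∧ (G.deleteEdges {e}).Reachable w u) ∧
  (∀ v : V, ¬ (G.induce {u : V | u ≠ v}).Connected →
    ∀ w : ↥{u : V | u ≠ v}, ∃ x : ↥{u : V | u ≠ v},
      (G.neighborSet x.1).ncard = 1 ∧ (G.induce {u : V | u ≠ v}).Reachable w x)


/-!
The leaves give maximum degree three, and since a `K₄` with all four degrees equal to three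
would be a whole component, connectivity and the leaves exclude `K₄` as well. Such a chordal
graph has a simplicial vertex `v` (its neighbourhood is a clique) with at least one neighbour,
i.e. a leaf or a degree-two vertex with adjacent neighbours. Deleting the leaf, or suppressing
`v` and deleting one of the two resulting parallel edges, leaves the multigraph of the
connected chordal graph `N - v`, so the reduction continues down to `K₂`.

The simplicial vertex is found at the start `x` of a longest path, all of whose neighbours lie
on the path. If `x` has two neighbours, chordality puts every edge at `x` in a triangle, so
either `x` is simplicial or `x` and its three neighbours span a diamond `K₄ - pq`. Every edge
leaving the diamond at `p` or `q` is then a bridge, and the maximality of the path forces `p`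
or `q` to have degree two.
-/

namespace SimpleGraph

section

variable {V : Type*} {G : SimpleGraph V}

theorem Walk.exists_length_lt_of_adj {u v a b : V} (p : G.Walk u v) (ha : a ∈ p.support)
    (hb : b ∈ p.support) (hab : G.Adj a b) (h : s(a, b) ∉ p.edges) :
    ∃ q : G.Walk u v, q.length < p.length ∧ q.edges ⊆ s(a, b) :: p.edges := by
  obtain ⟨i, rfl, hi⟩ := mem_support_iff_exists_getVert.mp ha
  obtain ⟨j, rfl, hj⟩ := mem_support_iff_exists_getVert.mp hb
  clear ha hb
  wlog hij : i < j generalizing i j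
  · have hji : j < i := by
      refine lt_of_le_of_ne (not_lt.mp hij) fun hji => hab.ne ?_
      rw [hji]
    obtain ⟨q, hq, hqe⟩ := this j hj i hi hab.symm (by rwa [Sym2.eq_swap]) hji
    exact ⟨q, hq, by rwa [Sym2.eq_swap]⟩
  have hij2 : i + 1 ≠ j := by
    rintro rfl
    exact h ((mk_mem_edges_iff_exists p).mpr ⟨i, by omega, rfl⟩)
  refine ⟨(p.take i).append (cons hab (p.drop j)), ?_, ?_⟩
  · simp only [length_append, take_length, length_cons, drop_length]
    omega
  · intro e he
    simp only [edges_append, edges_cons, edges_take, edges_drop, List.mem_append,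
      List.mem_cons] at he
    rcases he with he | rfl | he
    · exact List.mem_cons_of_mem _ (List.take_subset _ _ he)
    · exact List.mem_cons_self
    · exact List.mem_cons_of_mem _ (List.drop_subset _ _ he)

theorem IsChordal.exists_adj_adj_of_walk (hG : G.IsChordal) {u v : V} (huv : G.Adj u v)
    (p : G.Walk u v) (hp : s(u, v) ∉ p.edges) : ∃ w, G.Adj u w ∧ G.Adj v w := by
  induction hn : p.length using Nat.strong_induction_on generalizing p with
  | _ n ih =>
  classical
  have hq : p.bypass.IsPath := p.bypass_isPath
  have hqe : s(u, v) ∉ p.bypass.edges := fun h => hp (p.edges_bypass_subset_edges h)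
  have hqn : p.bypass.length ≤ n := hn ▸ p.length_bypass_le_length
  set q := p.bypass
  rcases (show q.length = 0 ∨ q.length = 1 ∨ q.length = 2 ∨ 3 ≤ q.length by omega)
    with h | h | h | h
  · exact absurd (Walk.eq_of_length_eq_zero h) huv.ne
  · refine absurd ((Walk.mk_mem_edges_iff_exists q).mpr ⟨0, by omega, ?_⟩) hqe
    rw [q.getVert_zero, zero_add, ← h, q.getVert_length]
  · refine ⟨q.getVert 1, by simpa using q.adj_getVert_succ (i := 0) (by omega), ?_⟩
    have h2 := q.adj_getVert_succ (i := 1) (by omega)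
    rw [show 1 + 1 = q.length by omega, q.getVert_length] at h2
    exact h2.symm
  -- the path `q` closes up with `vu` to a cycle of length ≥ 4, whose chord shortcuts `q`
  · have hc : (Walk.cons huv.symm q).IsCycle :=
      (Walk.cons_isCycle_iff q huv.symm).mpr ⟨hq, by rwa [Sym2.eq_swap]⟩
    obtain ⟨a, b, ha, hb, hab, hchord⟩ := hG v _ hc (by simp; omega)
    simp only [Walk.support_cons, List.mem_cons, Walk.edges_cons] at ha hb hchord
    have hsupp : ∀ {x}, x = v ∨ x ∈ q.support → x ∈ q.support := by
      rintro x (rfl | hx)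
      · exact q.end_mem_support
      · exact hx
    obtain ⟨r, hr, hre⟩ := q.exists_length_lt_of_adj (hsupp ha) (hsupp hb) hab
      (fun h => hchord (Or.inr h))
    refine ih r.length (by omega) r (fun h => ?_) rfl
    rcases List.mem_cons.mp (hre h) with h | h
    · exact hchord (Or.inl (h.symm.trans Sym2.eq_swap))
    · exact hqe h

theorem IsChordal.exists_adj_adj_of_walk_avoiding (hG : G.IsChordal) {x w w' : V}
    (hw : G.Adj x w) (hw' : G.Adj x w') (hne : w' ≠ w) (q : G.Walk w' w) (hq : x ∉ q.support) :
    ∃ t, G.Adj x t ∧ G.Adj w t := by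
  refine hG.exists_adj_adj_of_walk hw (.cons hw' q) ?_
  rw [Walk.edges_cons, List.mem_cons, not_or, Sym2.congr_right]
  exact ⟨hne.symm, fun h => hq (q.fst_mem_support_of_mem_edges h)⟩

theorem IsChordal.deleteIncidenceSet (hG : G.IsChordal) (x : V) :
    (G.deleteIncidenceSet x).IsChordal := by
  intro v c hc hlen
  have hle := G.deleteIncidenceSet_le x
  obtain ⟨a, b, ha, hb, hab, hchord⟩ :=
    hG v (c.mapLe hle) (hc.mapLe hle) (by rwa [Walk.length_mapLe])
  rw [Walk.support_mapLe_eq_support] at ha hb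
  rw [Walk.edges_mapLe_eq_edges] at hchord
  have hne : ∀ {w}, w ∈ c.support → w ≠ x := by
    rintro w hw rfl
    obtain ⟨e, he, hwe⟩ := (Walk.mem_support_iff_exists_mem_edges_of_not_nil hc.not_nil).mp hw
    have he' := c.edges_subset_edgeSet he
    rw [edgeSet_deleteIncidenceSet] at he'
    exact he'.2 ⟨he'.1, hwe⟩
  exact ⟨a, b, ha, hb, deleteIncidenceSet_adj.mpr ⟨hab, hne ha, hne hb⟩, hchord⟩

theorem eq_or_eq_or_eq_of_adj [Finite V] {v a b c x : V} (hdeg : (G.neighborSet v).ncard ≤ 3)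
    (ha : G.Adj v a) (hb : G.Adj v b) (hc : G.Adj v c) (hab : a ≠ b) (hac : a ≠ c) (hbc : b ≠ c)
    (hx : G.Adj v x) : x = a ∨ x = b ∨ x = c := by
  have hsub : ({a, b, c} : Set V) ⊆ G.neighborSet v := by
    rintro y (rfl | rfl | rfl) <;> assumption
  have heq := Set.eq_of_subset_of_ncard_le hsub
    (by rwa [Set.ncard_eq_three.mpr ⟨a, b, c, hab, hac, hbc, rfl⟩]) (Set.toFinite _)
  have hx' : x ∈ G.neighborSet v := hx
  rwa [← heq] at hx'

theorem CliqueFree.not_adj {a b c d : V} (h4 : G.CliqueFree 4) (hab : G.Adj a b)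
    (hac : G.Adj a c) (had : G.Adj a d) (hbc : G.Adj b c) (hbd : G.Adj b d) : ¬G.Adj c d := by
  classical
  intro hcd
  refine h4 {a, b, c, d} ((is3Clique_triple_iff.mpr ⟨hbc, hbd, hcd⟩).insert ?_)
  simp [hab, hac, had]

theorem ncard_neighborSet_le_two_of_isClique [Finite V] {v : V}
    (hdeg : (G.neighborSet v).ncard ≤ 3) (h4 : G.CliqueFree 4)
    (hcl : G.IsClique (G.neighborSet v)) : (G.neighborSet v).ncard ≤ 2 := by
  by_contra h
  obtain ⟨a, b, c, hab, hac, hbc, habc⟩ :=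
    Set.ncard_eq_three.mp (by omega : (G.neighborSet v).ncard = 3)
  have hmem : a ∈ G.neighborSet v ∧ b ∈ G.neighborSet v ∧ c ∈ G.neighborSet v := by
    simp [habc]
  exact h4.not_adj hmem.1 hmem.2.1 hmem.2.2 (hcl hmem.1 hmem.2.1 hab) (hcl hmem.1 hmem.2.2 hac)
    (hcl hmem.2.1 hmem.2.2 hbc)

theorem Connected.cliqueFree_four [Finite V] (hconn : G.Connected)
    (hdeg : ∀ v, (G.neighborSet v).ncard ≤ 3) {w : V} (hw : (G.neighborSet w).ncard < 3) :
    G.CliqueFree 4 := by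
  classical
  intro t ht
  have hnbr : ∀ x ∈ t, (↑(t.erase x) : Set V) ⊆ G.neighborSet x := fun x hx y hy => by
    rw [Finset.coe_erase, Set.mem_sdiff, Set.mem_singleton_iff] at hy
    exact ht.isClique (Finset.mem_coe.mpr hx) hy.1 (Ne.symm hy.2)
  have hcard : ∀ x ∈ t, (t.erase x).card = 3 := fun x hx => by
    rw [Finset.card_erase_of_mem hx, ht.card_eq]
  -- a vertex of a `K₄` has all its neighbours in the `K₄`, so the `K₄` is a whole component
  have hclosed : ∀ x ∈ t, ∀ y, G.Adj x y → y ∈ t := by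
    intro x hx y hy
    obtain ⟨a, b, c, hab, hac, hbc, habc⟩ := Finset.card_eq_three.mp (hcard x hx)
    have hsub := hnbr x hx
    rw [habc] at hsub
    have hy' := eq_or_eq_or_eq_of_adj (hdeg x) (hsub (by simp)) (hsub (by simp)) (hsub (by simp))
      hab hac hbc hy
    refine Finset.mem_of_mem_erase (s := t) (a := x) ?_
    rw [habc]
    simpa using hy'
  obtain ⟨x, hx⟩ := Finset.card_pos.mp (by rw [ht.card_eq]; norm_num : 0 < t.card)
  have hreach : ∀ {u v}, G.Reachable u v → u ∈ t → v ∈ t := by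
    rintro u v ⟨p⟩
    induction p with
    | nil => exact id
    | cons h _ ih => exact fun hu => ih (hclosed _ hu _ h)
  have hwt : w ∈ t := hreach (hconn.preconnected x w) hx
  have := Set.ncard_le_ncard (hnbr w hwt) (Set.toFinite _)
  rw [Set.ncard_coe_finset, hcard w hwt] at this
  omega

def Walk.IsLongestPath {u v : V} (p : G.Walk u v) : Prop :=
  p.IsPath ∧ ∀ ⦃x y : V⦄ (q : G.Walk x y), q.IsPath → q.length ≤ p.length

theorem exists_isLongestPath [Finite V] [Nonempty V] :
    ∃ (u v : V) (p : G.Walk u v), p.IsLongestPath := by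
  classical
  have := Fintype.ofFinite V
  let IsPathLength (n : ℕ) : Prop := ∃ (x y : V) (q : G.Walk x y), q.IsPath ∧ q.length = n
  obtain ⟨u, v, p, hp, hlen⟩ := Nat.findGreatest_spec (P := IsPathLength)
    (Nat.zero_le (Fintype.card V)) ⟨Classical.arbitrary V, _, .nil, .nil, rfl⟩
  exact ⟨u, v, p, hp, fun x y q hq =>
    hlen ▸ Nat.le_findGreatest hq.length_lt.le ⟨x, y, q, hq, rfl⟩⟩

theorem Walk.IsLongestPath.adj_mem_support {u v x : V} {p : G.Walk u v} (hp : p.IsLongestPath)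
    (h : G.Adj u x) : x ∈ p.support := by
  by_contra hx
  have := hp.2 (cons h.symm p) (hp.1.cons hx)
  simp at this

theorem Walk.IsLongestPath.exists_adj_adj (hG : G.IsChordal) {x x₁ y w z : V} {h : G.Adj x x₁}
    {Q : G.Walk x₁ y} (hP : (cons h Q).IsLongestPath) (hw : G.Adj x w) (hwx : w ≠ x₁)
    (hz : G.Adj x z) : ∃ t, G.Adj x t ∧ G.Adj z t := by
  classical
  have hmem : ∀ {v}, G.Adj x v → v ∈ Q.support := fun hv =>
    (List.mem_cons.mp (hP.adj_mem_support hv)).resolve_left hv.ne'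
  have hxQ : x ∉ Q.support := ((cons_isPath_iff _ _).mp hP.1).2
  obtain ⟨w', hw', hw'z⟩ : ∃ w', G.Adj x w' ∧ w' ≠ z := by
    by_cases hz₁ : z = x₁
    exacts [⟨w, hw, hz₁ ▸ hwx⟩, ⟨x₁, h, Ne.symm hz₁⟩]
  refine hG.exists_adj_adj_of_walk_avoiding hz hw' hw'z
    ((Q.takeUntil w' (hmem hw')).reverse.append (Q.takeUntil z (hmem hz))) fun hx => ?_
  rw [support_append, List.mem_append, support_reverse, List.mem_reverse] at hx
  rcases hx with hx | hx
  · exact hxQ (Q.support_takeUntil_subset_support _ hx)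
  · exact hxQ (Q.support_takeUntil_subset_support _ (List.mem_of_mem_tail hx))

/-- `x` and `c` are the two vertices of degree three of a diamond `K₄ - pq`, and have no
neighbours outside it. -/
structure IsDiamond (G : SimpleGraph V) (x c p q : V) : Prop where
  adj_xc : G.Adj x c
  adj_xp : G.Adj x p
  adj_xq : G.Adj x q
  adj_cp : G.Adj c p
  adj_cq : G.Adj c q
  ne_pq : p ≠ q
  not_adj_pq : ¬G.Adj p q
  eq_of_adj_x : ∀ z, G.Adj x z → z = c ∨ z = p ∨ z = q
  eq_of_adj_c : ∀ z, G.Adj c z → z = x ∨ z = p ∨ z = q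

namespace IsDiamond

variable {x c p q : V}

theorem of_adj [Finite V] (hdeg : ∀ v, (G.neighborSet v).ncard ≤ 3) (hxc : G.Adj x c)
    (hxp : G.Adj x p) (hxq : G.Adj x q) (hcp : G.Adj c p) (hcq : G.Adj c q) (hpq : p ≠ q)
    (hnpq : ¬G.Adj p q) : G.IsDiamond x c p q where
  adj_xc := hxc
  adj_xp := hxp
  adj_xq := hxq
  adj_cp := hcp
  adj_cq := hcq
  ne_pq := hpq
  not_adj_pq := hnpq
  eq_of_adj_x _ := eq_or_eq_or_eq_of_adj (hdeg x) hxc hxp hxq hcp.ne hcq.ne hpq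
  eq_of_adj_c _ := eq_or_eq_or_eq_of_adj (hdeg c) hxc.symm hcp hcq hxp.ne hxq.ne hpq

theorem symm (hD : G.IsDiamond x c p q) : G.IsDiamond x c q p where
  adj_xc := hD.adj_xc
  adj_xp := hD.adj_xq
  adj_xq := hD.adj_xp
  adj_cp := hD.adj_cq
  adj_cq := hD.adj_cp
  ne_pq := hD.ne_pq.symm
  not_adj_pq := fun h => hD.not_adj_pq h.symm
  eq_of_adj_x z hz := by rcases hD.eq_of_adj_x z hz with h | h | h <;> simp [h]
  eq_of_adj_c z hz := by rcases hD.eq_of_adj_c z hz with h | h | h <;> simp [h]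

/-- Every edge `pz` leaving the diamond is a bridge: a common neighbour of `p` and `z` would be
`x` or `c`, which have no neighbours outside the diamond. -/
theorem mem_support_of_adj [Finite V] (hD : G.IsDiamond x c p q) (hG : G.IsChordal)
    (hdeg : (G.neighborSet p).ncard ≤ 3) {z : V} (hz : G.Adj p z) (hzx : z ≠ x) (hzc : z ≠ c)
    (W : G.Walk z c) : p ∈ W.support := by
  by_contra hW
  obtain ⟨t, hpt, hzt⟩ :=
    hG.exists_adj_adj_of_walk_avoiding hz hD.adj_cp.symm hzc.symm W.reverse (by simpa using hW)
  have hzq : z ≠ q := fun h => hD.not_adj_pq (h ▸ hz)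
  rcases eq_or_eq_or_eq_of_adj hdeg hD.adj_xp.symm hD.adj_cp.symm hz hD.adj_xc.ne hzx.symm
    hzc.symm hpt with rfl | rfl | rfl
  · rcases hD.eq_of_adj_x z hzt.symm with h | h | h
    exacts [hzc h, hz.ne' h, hzq h]
  · rcases hD.eq_of_adj_c z hzt.symm with h | h | h
    exacts [hzx h, hz.ne' h, hzq h]
  · exact hzt.ne rfl

theorem not_isLongestPath_cons_cons [Finite V] (hD : G.IsDiamond x c p q) (hG : G.IsChordal)
    (hdeg : (G.neighborSet p).ncard ≤ 3) {y : V} {h₁ : G.Adj x c} {h₂ : G.Adj c p}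
    {R : G.Walk p y} : ¬(Walk.cons h₁ (.cons h₂ R)).IsLongestPath := by
  classical
  intro hP
  have hqR : q ∈ R.support := by
    have hq := hP.adj_mem_support hD.adj_xq
    simp only [Walk.support_cons, List.mem_cons] at hq
    rcases hq with h | h | h
    exacts [absurd h hD.adj_xq.ne', absurd h hD.adj_cq.ne', h]
  have hpath := hP.1
  simp only [Walk.cons_isPath_iff, Walk.support_cons, List.mem_cons, not_or] at hpath
  obtain ⟨⟨hR, hcR⟩, -, hxR⟩ := hpath
  cases R with
  | nil => exact hD.ne_pq (List.mem_singleton.mp hqR).symm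
  | @cons _ z _ h₃ R' =>
    have hpR' : p ∉ R'.support := ((Walk.cons_isPath_iff _ _).mp hR).2
    have hqR' : q ∈ R'.support := (List.mem_cons.mp hqR).resolve_left hD.ne_pq.symm
    have := hD.mem_support_of_adj hG hdeg h₃ (fun h => hxR (by simp [← h]))
      (fun h => hcR (by simp [← h]))
      ((R'.takeUntil q hqR').concat hD.adj_cq.symm)
    rw [Walk.support_concat, List.mem_append, List.mem_singleton] at this
    exact this.elim (fun h => hpR' (R'.support_takeUntil_subset_support hqR' h))
      fun h => hD.adj_cp.ne' h

theorem neighborSet_eq_of_isLongestPath [Finite V] (hD : G.IsDiamond x c p q)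
    (hG : G.IsChordal) (hdeg : (G.neighborSet p).ncard ≤ 3) {y : V} {h₁ : G.Adj x p}
    {Q : G.Walk p y} (hP : (Walk.cons h₁ Q).IsLongestPath) : G.neighborSet p = {x, c} := by
  classical
  have hcQ : c ∈ Q.support := by
    have hc := hP.adj_mem_support hD.adj_xc
    rw [Walk.support_cons, List.mem_cons] at hc
    exact hc.resolve_left hD.adj_xc.ne'
  obtain ⟨hQ, hxQ⟩ := (Walk.cons_isPath_iff _ _).mp hP.1
  cases Q with
  | nil => exact absurd (List.mem_singleton.mp hcQ) hD.adj_cp.ne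
  | @cons _ z _ h₂ R =>
    have hpR : p ∉ R.support := ((Walk.cons_isPath_iff _ _).mp hQ).2
    by_cases hzc : z = c
    · subst hzc
      -- swapping the first two vertices of the path gives a longest path starting at `p`
      have hP' : (Walk.cons h₁.symm (.cons hD.adj_xc R)).IsLongestPath := by
        refine ⟨?_, fun _ _ r hr => (hP.2 r hr).trans_eq (by simp)⟩
        rw [Walk.isPath_def]
        exact (List.Perm.swap _ _ _).nodup_iff.mp hP.1.support_nodup
      ext w
      refine ⟨fun hw => ?_, ?_⟩
      · have hwP := hP'.adj_mem_support hw
        simp only [Walk.support_cons, List.mem_cons] at hwP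
        rcases hwP with h | h | h
        · exact absurd h hw.ne'
        · exact Or.inl h
        by_contra hwxc
        simp only [Set.mem_insert_iff, Set.mem_singleton_iff, not_or] at hwxc
        have := hD.mem_support_of_adj hG hdeg hw hwxc.1 hwxc.2 (R.takeUntil w h).reverse
        rw [Walk.support_reverse, List.mem_reverse] at this
        exact hpR (R.support_takeUntil_subset_support h this)
      · rintro (rfl | rfl)
        exacts [h₁.symm, hD.adj_cp.symm]
    · have hcR : c ∈ R.support := (List.mem_cons.mp hcQ).resolve_left hD.adj_cp.ne
      have := hD.mem_support_of_adj hG hdeg h₂ (fun h => hxQ (by simp [← h])) hzc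
        (R.takeUntil c hcR)
      exact absurd (R.support_takeUntil_subset_support hcR this) hpR

theorem exists_isClique_neighborSet [Finite V] (hD : G.IsDiamond x c p q) (hG : G.IsChordal)
    (hdeg : ∀ v, (G.neighborSet v).ncard ≤ 3) {y : V} {P : G.Walk x y}
    (hP : P.IsLongestPath) : ∃ v, (G.neighborSet v).Nonempty ∧ G.IsClique (G.neighborSet v) := by
  have hclique : G.IsClique {x, c} := isClique_pair.mpr fun _ => hD.adj_xc
  cases P with
  | nil => exact absurd (hP.adj_mem_support hD.adj_xc) (by simpa using hD.adj_xc.ne')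
  | cons h₁ Q =>
    rcases hD.eq_of_adj_x _ h₁ with rfl | rfl | rfl
    · cases Q with
      | nil =>
        exact absurd (hP.adj_mem_support hD.adj_xp) (by simp [hD.adj_xp.ne', hD.adj_cp.ne'])
      | cons h₂ R =>
        have hpath := hP.1
        simp only [Walk.cons_isPath_iff, Walk.support_cons, List.mem_cons, not_or] at hpath
        rcases hD.eq_of_adj_c _ h₂ with rfl | rfl | rfl
        · exact absurd R.start_mem_support hpath.2.2
        · exact absurd hP (hD.not_isLongestPath_cons_cons hG (hdeg _))
        · exact absurd hP (hD.symm.not_isLongestPath_cons_cons hG (hdeg _))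
    · exact ⟨_, ⟨x, h₁.symm⟩, hD.neighborSet_eq_of_isLongestPath hG (hdeg _) hP ▸ hclique⟩
    · exact ⟨_, ⟨x, h₁.symm⟩, hD.symm.neighborSet_eq_of_isLongestPath hG (hdeg _) hP ▸ hclique⟩

end IsDiamond

theorem IsChordal.exists_isClique_neighborSet [Finite V] (hG : G.IsChordal)
    (hdeg : ∀ v, (G.neighborSet v).ncard ≤ 3) (h4 : G.CliqueFree 4) {a b : V} (hab : G.Adj a b) :
    ∃ v, (G.neighborSet v).Nonempty ∧ G.IsClique (G.neighborSet v) := by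
  have : Nonempty V := ⟨a⟩
  obtain ⟨x, y, P, hP⟩ := exists_isLongestPath (G := G)
  cases P with
  | nil => simpa using hP.2 (.cons hab .nil) (by simp [hab.ne])
  | @cons _ x₁ _ h₁ Q =>
    by_cases hleaf : ∀ z, G.Adj x z → z = x₁
    · refine ⟨x, ⟨x₁, h₁⟩, ?_⟩
      rw [show G.neighborSet x = {x₁} from Set.eq_singleton_iff_unique_mem.mpr ⟨h₁, hleaf⟩]
      exact isClique_singleton _
    push Not at hleaf
    obtain ⟨w, hw, hwx⟩ := hleaf
    obtain ⟨t, hxt, hx₁t⟩ := hP.exists_adj_adj hG hw hwx h₁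
    by_cases hdeg2 : ∀ z, G.Adj x z → z = x₁ ∨ z = t
    · refine ⟨x, ⟨x₁, h₁⟩, ?_⟩
      rw [show G.neighborSet x = {x₁, t} from Set.ext fun z =>
        ⟨hdeg2 z, by rintro (rfl | rfl); exacts [h₁, hxt]⟩]
      exact isClique_pair.mpr fun _ => hx₁t
    push Not at hdeg2
    obtain ⟨z, hxz, hzx₁, hzt⟩ := hdeg2
    -- the third neighbour `z` lies in a triangle with `x` and `x₁` or with `x` and `t`
    obtain ⟨s, hxs, hzs⟩ := hP.exists_adj_adj hG hw hwx hxz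
    rcases eq_or_eq_or_eq_of_adj (hdeg x) h₁ hxt hxz hx₁t.ne (Ne.symm hzx₁) (Ne.symm hzt) hxs
      with rfl | rfl | rfl
    · have hD := IsDiamond.of_adj hdeg h₁ hxt hxz hx₁t hzs.symm (Ne.symm hzt)
        (h4.not_adj h₁ hxt hxz hx₁t hzs.symm)
      exact hD.exists_isClique_neighborSet hG hdeg hP
    · have hD := IsDiamond.of_adj hdeg hxt h₁ hxz hx₁t.symm hzs.symm (Ne.symm hzx₁)
        (h4.not_adj hxt h₁ hxz hx₁t.symm hzs.symm)
      exact hD.exists_isClique_neighborSet hG hdeg hP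
    · exact absurd hzs (G.irrefl)

theorem Reachable.deleteIncidenceSet_of_isClique {x u w : V} (hx : G.IsClique (G.neighborSet x))
    (h : G.Reachable u w) (hu : u ≠ x) (hw : w ≠ x) : (G.deleteIncidenceSet x).Reachable u w := by
  -- a walk through `x` can jump directly between the two neighbours of `x` it visits
  suffices key : ∀ {u} (p : G.Walk u w), (u ≠ x → (G.deleteIncidenceSet x).Reachable u w) ∧
      (u = x → ∀ y, G.Adj x y → (G.deleteIncidenceSet x).Reachable y w) by
    obtain ⟨p⟩ := h
    exact (key p).1 hu
  clear h hu
  intro u p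
  induction p with
  | nil => exact ⟨fun _ => .refl _, fun h => absurd h hw⟩
  | @cons u y _ hadj p ih =>
    obtain ⟨ih₁, ih₂⟩ := ih hw
    refine ⟨fun hu => ?_, ?_⟩
    · by_cases hy : y = x
      · subst hy
        exact ih₂ rfl u hadj.symm
      · exact (deleteIncidenceSet_adj.mpr ⟨hadj, hu, hy⟩).reachable.trans (ih₁ hy)
    · rintro rfl z hz
      by_cases hzy : z = y
      · exact hzy ▸ ih₁ hadj.ne'
      · exact (deleteIncidenceSet_adj.mpr ⟨hx hz hadj hzy, hz.ne', hadj.ne'⟩).reachable.trans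
          (ih₁ hadj.ne')

theorem mem_edgeSet_iff_exists_or_mem_deleteIncidenceSet {v : V} {e : Sym2 V} :
    e ∈ G.edgeSet ↔
      (∃ w ∈ G.neighborSet v, e = s(v, w)) ∨ e ∈ (G.deleteIncidenceSet v).edgeSet := by
  induction e using Sym2.ind with
  | _ y z =>
  simp only [mem_edgeSet, mem_neighborSet, deleteIncidenceSet_adj, Sym2.eq_iff]
  constructor
  · intro h
    by_cases hy : y = v
    · exact Or.inl ⟨z, hy ▸ h, Or.inl ⟨hy, rfl⟩⟩
    by_cases hz : z = v
    · exact Or.inl ⟨y, hz ▸ h.symm, Or.inr ⟨rfl, hz⟩⟩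
    exact Or.inr ⟨h, hy, hz⟩
  · rintro (⟨w, hw, ⟨rfl, rfl⟩ | ⟨rfl, rfl⟩⟩ | ⟨h, -⟩)
    exacts [hw, hw.symm, h]

end

variable {V : Type} [Fintype V] [DecidableEq V] {G : SimpleGraph V}

noncomputable def toMGraphOn (G : SimpleGraph V) (s : Finset V) : MGraph V :=
  ⟨s, (Set.toFinite G.edgeSet).toFinset.val⟩

theorem toMGraphOn_univ (G : SimpleGraph V) : G.toMGraphOn Finset.univ = G.toMGraph := rfl

theorem mem_edges_toMGraphOn {s : Finset V} {e : Sym2 V} :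
    e ∈ (G.toMGraphOn s).edges ↔ e ∈ G.edgeSet :=
  Set.Finite.mem_toFinset _

theorem nodup_edges_toMGraphOn (s : Finset V) : (G.toMGraphOn s).edges.Nodup :=
  Finset.nodup _

theorem notMem_edges_toMGraphOn_deleteIncidenceSet (s : Finset V) {v : V} {e : Sym2 V}
    (hv : v ∈ e) : e ∉ ((G.deleteIncidenceSet v).toMGraphOn s).edges := by
  rw [mem_edges_toMGraphOn, edgeSet_deleteIncidenceSet]
  exact fun he => he.2 ⟨he.1, hv⟩

theorem degree_toMGraphOn_deleteIncidenceSet (s : Finset V) (v : V) :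
    ((G.deleteIncidenceSet v).toMGraphOn s).degree v = 0 := by
  refine Multiset.sum_eq_zero fun n hn => ?_
  obtain ⟨e, he, rfl⟩ := Multiset.mem_map.mp hn
  have hve : v ∉ e := fun hv => notMem_edges_toMGraphOn_deleteIncidenceSet s hv he
  rw [if_neg (by rintro rfl; exact hve (Sym2.mem_mk_left v v)), if_neg hve]

theorem edges_toMGraphOn_of_neighborSet_eq_singleton {v a : V} (h : G.neighborSet v = {a})
    (s t : Finset V) :
    (G.toMGraphOn s).edges = s(v, a) ::ₘ ((G.deleteIncidenceSet v).toMGraphOn t).edges := by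
  refine (Multiset.Nodup.ext (nodup_edges_toMGraphOn s) (Multiset.nodup_cons.mpr
    ⟨notMem_edges_toMGraphOn_deleteIncidenceSet t (Sym2.mem_mk_left v a),
      nodup_edges_toMGraphOn t⟩)).mpr fun e => ?_
  rw [Multiset.mem_cons, mem_edges_toMGraphOn, mem_edges_toMGraphOn,
    mem_edgeSet_iff_exists_or_mem_deleteIncidenceSet (v := v), h]
  simp

theorem edges_toMGraphOn_of_neighborSet_eq_pair {v a b : V} (h : G.neighborSet v = {a, b})
    (hab : a ≠ b) (s t : Finset V) :
    (G.toMGraphOn s).edges =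
      s(a, v) ::ₘ s(v, b) ::ₘ ((G.deleteIncidenceSet v).toMGraphOn t).edges := by
  have hva : G.Adj v a := by simp [← mem_neighborSet, h]
  have hnd : (s(a, v) ::ₘ s(v, b) ::ₘ ((G.deleteIncidenceSet v).toMGraphOn t).edges).Nodup := by
    refine Multiset.nodup_cons.mpr ⟨?_, Multiset.nodup_cons.mpr
      ⟨notMem_edges_toMGraphOn_deleteIncidenceSet t (Sym2.mem_mk_left v b),
        nodup_edges_toMGraphOn t⟩⟩
    rw [Multiset.mem_cons, not_or]
    exact ⟨by simp [hab, hva.ne'],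
      notMem_edges_toMGraphOn_deleteIncidenceSet t (Sym2.mem_mk_right a v)⟩
  refine (Multiset.Nodup.ext (nodup_edges_toMGraphOn s) hnd).mpr fun e => ?_
  rw [Multiset.mem_cons, Multiset.mem_cons, mem_edges_toMGraphOn, mem_edges_toMGraphOn,
    mem_edgeSet_iff_exists_or_mem_deleteIncidenceSet (v := v), h]
  simp [Sym2.eq_swap (a := a), or_assoc]

theorem reflTransGen_step_toMGraphOn_deleteIncidenceSet {s : Finset V} {v : V}
    (hs : 2 < s.card) (hv : v ∈ s) (hne : (G.neighborSet v).Nonempty)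
    (hcl : G.IsClique (G.neighborSet v)) (hcard : (G.neighborSet v).ncard ≤ 2) :
    Relation.ReflTransGen MGraph.Step (G.toMGraphOn s)
      ((G.deleteIncidenceSet v).toMGraphOn (s.erase v)) := by
  have h0 := degree_toMGraphOn_deleteIncidenceSet (G := G) (s.erase v) v
  have hpos := (Set.ncard_pos (Set.toFinite _)).mpr hne
  rcases (show (G.neighborSet v).ncard = 1 ∨ (G.neighborSet v).ncard = 2 by omega) with h | h
  · obtain ⟨a, ha⟩ := Set.ncard_eq_one.mp h
    have hva : G.Adj v a := by simp [← mem_neighborSet, ha]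
    have hE := edges_toMGraphOn_of_neighborSet_eq_singleton ha s (s.erase v)
    have hdeg : (G.toMGraphOn s).degree v = 1 := by
      simp only [MGraph.degree] at h0 ⊢
      rw [hE, Multiset.map_cons, Multiset.sum_cons, h0]
      simp [hva.ne']
    have hstep := MGraph.Step.deleteLeaf _ v s(v, a) hs hv hdeg
      (mem_edges_toMGraphOn.mpr hva) (Sym2.mem_mk_left v a)
    rw [hE, Multiset.erase_cons_head] at hstep
    exact .single hstep
  · obtain ⟨a, b, hab, hab'⟩ := Set.ncard_eq_two.mp h
    have hva : G.Adj v a := by simp [← mem_neighborSet, hab']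
    have hvb : G.Adj v b := by simp [← mem_neighborSet, hab']
    have hE := edges_toMGraphOn_of_neighborSet_eq_pair hab' hab s (s.erase v)
    have hdeg : (G.toMGraphOn s).degree v = 2 := by
      simp only [MGraph.degree] at h0 ⊢
      rw [hE, Multiset.map_cons, Multiset.map_cons, Multiset.sum_cons, Multiset.sum_cons, h0]
      simp [hva.ne', hvb.ne']
    -- suppressing `v` doubles the edge `ab`, and one copy is then deleted
    have hsuppress := MGraph.Step.suppress _ v a b _ hs hv hdeg hva.ne' hvb.ne' hE
    have hrest : s(a, b) ∈ ((G.deleteIncidenceSet v).toMGraphOn (s.erase v)).edges :=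
      mem_edges_toMGraphOn.mpr (deleteIncidenceSet_adj.mpr
        ⟨hcl (by simp [hab']) (by simp [hab']) hab, hva.ne', hvb.ne'⟩)
    have hparallel := MGraph.Step.deleteParallel
      ⟨s.erase v, s(a, b) ::ₘ ((G.deleteIncidenceSet v).toMGraphOn (s.erase v)).edges⟩ s(a, b)
      (by simpa using hab) (by simpa [Nat.one_le_iff_ne_zero] using hrest)
    rw [Multiset.erase_cons_head] at hparallel
    exact .head hsuppress (.single hparallel)

theorem isK2_toMGraphOn {s : Finset V} (hs : s.card = 2) (hsupp : ∀ u w, G.Adj u w → u ∈ s)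
    (hconn : ∀ u ∈ s, ∀ w ∈ s, G.Reachable u w) : (G.toMGraphOn s).IsK2 := by
  obtain ⟨x, y, hxy, rfl⟩ := Finset.card_eq_two.mp hs
  have hmem : ∀ {u w}, G.Adj u w → u = x ∧ w = y ∨ u = y ∧ w = x := by
    intro u w h
    have hu := hsupp u w h
    have hw := hsupp w u h.symm
    simp only [Finset.mem_insert, Finset.mem_singleton] at hu hw
    rcases hu with rfl | rfl <;> rcases hw with rfl | rfl
    exacts [absurd h (G.irrefl), .inl ⟨rfl, rfl⟩, .inr ⟨rfl, rfl⟩, absurd h (G.irrefl)]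
  have hadj : G.Adj x y := by
    obtain ⟨p⟩ := hconn x (by simp) y (by simp)
    cases p with
    | nil => exact absurd rfl hxy
    | cons h _ =>
      rcases hmem h with ⟨-, rfl⟩ | ⟨rfl, -⟩
      exacts [h, absurd rfl hxy]
  refine ⟨x, y, hxy, rfl, (Multiset.Nodup.ext (nodup_edges_toMGraphOn _)
    (Multiset.nodup_singleton _)).mpr fun e => ?_⟩
  rw [mem_edges_toMGraphOn, Multiset.mem_singleton]
  induction e using Sym2.ind with
  | _ u w =>
  refine ⟨fun h => ?_, fun h => h ▸ hadj⟩
  rcases hmem h with ⟨rfl, rfl⟩ | ⟨rfl, rfl⟩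
  exacts [rfl, Sym2.eq_swap]

theorem IsChordal.reduces_toMGraphOn (hG : G.IsChordal) (hdeg : ∀ v, (G.neighborSet v).ncard ≤ 3)
    (h4 : G.CliqueFree 4) {s : Finset V} (hs : 2 ≤ s.card) (hsupp : ∀ u w, G.Adj u w → u ∈ s)
    (hconn : ∀ u ∈ s, ∀ w ∈ s, G.Reachable u w) : (G.toMGraphOn s).Reduces := by
  induction hn : s.card generalizing G s with
  | zero => omega
  | succ n ih =>
    rcases hs.eq_or_lt with h2 | h2
    · exact ⟨_, .refl, isK2_toMGraphOn h2.symm hsupp hconn⟩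
    obtain ⟨a, b, hab⟩ : ∃ a b, G.Adj a b := by
      obtain ⟨u, hu, w, hw, huw⟩ := Finset.one_lt_card.mp (by omega : 1 < s.card)
      obtain ⟨p⟩ := hconn u hu w hw
      cases p with
      | nil => exact absurd rfl huw
      | cons h _ => exact ⟨_, _, h⟩
    obtain ⟨v, hne, hcl⟩ := hG.exists_isClique_neighborSet hdeg h4 hab
    have hv : v ∈ s := hsupp v _ hne.some_mem
    have hle := G.deleteIncidenceSet_le v
    have hcard : (s.erase v).card = n := by rw [Finset.card_erase_of_mem hv]; omega
    obtain ⟨H, hH, hK2⟩ := ih (hG.deleteIncidenceSet v)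
      (fun u => (Set.ncard_le_ncard (fun _ hy => hle hy) (Set.toFinite _)).trans (hdeg u))
      (h4.anti hle) (by omega)
      (fun u w h => Finset.mem_erase.mpr ⟨(deleteIncidenceSet_adj.mp h).2.1, hsupp u w (hle h)⟩)
      (fun u hu w hw => (hconn u (Finset.mem_of_mem_erase hu) w (Finset.mem_of_mem_erase hw)
        ).deleteIncidenceSet_of_isClique hcl (Finset.ne_of_mem_erase hu)
        (Finset.ne_of_mem_erase hw))
      hcard
    exact ⟨H, (reflTransGen_step_toMGraphOn_deleteIncidenceSet (by omega) hv hne hcl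
      (ncard_neighborSet_le_two_of_isClique (hdeg v) h4 hcl)).trans hH, hK2⟩

end SimpleGraph

theorem stmt15_general {V : Type} [Fintype V] [DecidableEq V] (N : SimpleGraph V)
    (hconn : N.Connected)
    (hleaves : 2 ≤ {v : V | (N.neighborSet v).ncard = 1}.ncard)
    (hbinary : ∀ v : V, (N.neighborSet v).ncard ≠ 1 → (N.neighborSet v).ncard = 3)
    (hchordal : N.IsChordal) :
    N.Edgebased := by
  have hdeg : ∀ v, (N.neighborSet v).ncard ≤ 3 := fun v => by
    by_cases h : (N.neighborSet v).ncard = 1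
    · omega
    · exact (hbinary v h).le
  obtain ⟨w, hw⟩ : {v : V | (N.neighborSet v).ncard = 1}.Nonempty :=
    Set.nonempty_of_ncard_ne_zero (by omega)
  have hcard : 2 ≤ (Finset.univ : Finset V).card := by
    rw [Finset.card_univ, ← Nat.card_eq_fintype_card]
    exact hleaves.trans (Set.ncard_le_card _)
  rw [SimpleGraph.Edgebased, ← SimpleGraph.toMGraphOn_univ]
  exact hchordal.reduces_toMGraphOn hdeg
    (hconn.cliqueFree_four hdeg (by rw [show (N.neighborSet w).ncard = 1 from hw]; norm_num))
    hcard (fun _ _ _ => Finset.mem_univ _) (fun u _ w _ => hconn.preconnected u w)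

theorem stmt15 {V : Type} [Fintype V] [DecidableEq V] (N : SimpleGraph V)
    (hconn : N.Connected)
    (hnodeg2 : ∀ v : V, (N.neighborSet v).ncard ≠ 2)
    (hleaves : 2 ≤ {v : V | (N.neighborSet v).ncard = 1}.ncard)
    (hproper : N.Proper)
    (hbinary : ∀ v : V, (N.neighborSet v).ncard ≠ 1 → (N.neighborSet v).ncard = 3)
    (hchordal : N.IsChordal) :
    N.Edgebased :=
  stmt15_general N hconn hleaves hbinary hchordal
end

section
/- Let G be a simple connected chordal graph in which every vertex has degree 2 or 3, with no cut edges and at least one vertex of degree 2. Then G can be reduced to a single edge (K2) by repeatedly suppressing degree-2 vertices and deleting copies of parallel edges. -/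
/-!
Let `v` have degree two, with neighbours `a` and `b`. As `va` is not a bridge, some path from `b`
to `a` avoids `v`, and closing it through `v` gives a cycle whose chords can only shorten the
path; so chordality forces the edge `ab`. If `a` has a third neighbour `c`, the same argument
applied to the non-bridge `ac` forces `bc`. With all degrees at most three, the graph is then the
triangle `vab` or the diamond `K₄ - vc`, since any further edge at `b` or `c` would be a bridge.
Both reduce to `K₂`: suppress `v`, delete the resulting parallel copy of `ab`, and repeat.
-/

namespace Set

variable {α : Type*} {s : Set α} {p q c : α}

theorem eq_pair_or_exists_eq_insert (hs : s.ncard = 2 ∨ s.ncard = 3) (hp : p ∈ s) (hq : q ∈ s)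
    (hpq : p ≠ q) : s = {p, q} ∨ ∃ c ∉ ({p, q} : Set α), s = insert c {p, q} := by
  have hsub : {p, q} ⊆ s := pair_subset hp hq
  have hfin : s.Finite := finite_of_ncard_pos (by omega)
  rcases hs with hs | hs
  · exact .inl (eq_of_subset_of_ncard_le hsub (by rw [hs, ncard_pair hpq]) hfin).symm
  · obtain ⟨c, hc, rfl⟩ := (exists_eq_insert_iff_ncard).mpr ⟨hsub, by rw [ncard_pair hpq, hs]⟩
    exact .inr ⟨c, hc, rfl⟩

theorem eq_insert_pair_of_mem (hs : s.ncard = 2 ∨ s.ncard = 3) (hp : p ∈ s) (hq : q ∈ s)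
    (hc : c ∈ s) (hpq : p ≠ q) (hcpq : c ∉ ({p, q} : Set α)) : s = insert c {p, q} := by
  have hfin : s.Finite := finite_of_ncard_pos (by omega)
  refine (eq_of_subset_of_ncard_le (insert_subset hc (pair_subset hp hq)) ?_ hfin).symm
  rw [ncard_insert_of_notMem hcpq, ncard_pair hpq]
  omega

end Set

namespace SimpleGraph

variable {V : Type*} {G : SimpleGraph V}

open Walk

theorem adj_iff_of_neighborSet_eq {v w : V} {s : Set V} (h : G.neighborSet v = s) :
    G.Adj v w ↔ w ∈ s := by
  rw [← mem_neighborSet, h]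

theorem Connected.mem_of_neighborSet_subset (hG : G.Connected) {S : Set V} {x : V} (hx : x ∈ S)
    (hS : ∀ y ∈ S, G.neighborSet y ⊆ S) (z : V) : z ∈ S := by
  by_contra hz
  obtain ⟨W⟩ := hG.preconnected x z
  obtain ⟨d, -, hd₁, hd₂⟩ := W.exists_boundary_dart S hx hz
  exact hd₂ (hS _ hd₁ d.adj)

theorem isBridge_of_neighborSet_subset {S : Set V} {b c : V} (hb : b ∈ S) (hc : c ∉ S)
    (hS : ∀ x ∈ S, x ≠ b → G.neighborSet x ⊆ S) (hbS : G.neighborSet b ⊆ insert c S) :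
    G.IsBridge s(b, c) := by
  rw [isBridge_iff]
  rintro ⟨W⟩
  obtain ⟨d, -, hd₁, hd₂⟩ := W.exists_boundary_dart S hb hc
  obtain ⟨hadj, hne⟩ := deleteEdges_adj.mp d.adj
  by_cases hdb : d.fst = b
  · rw [hdb] at hadj hne
    rcases hbS hadj with h | h
    · exact hne (by rw [h]; rfl)
    · exact hd₂ h
  · exact hd₂ (hS _ hd₁ hdb hadj)

theorem exists_path_of_not_isBridge {z x : V} (hzx : z ≠ x) (h : ¬ G.IsBridge s(z, x)) :
    ∃ (m : V) (q : G.Walk m x), G.Adj z m ∧ m ≠ x ∧ q.IsPath ∧ z ∉ q.support := by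
  classical
  rw [isBridge_iff, not_not] at h
  obtain ⟨W⟩ := h
  cases hW : W.bypass with
  | nil => exact absurd rfl hzx
  | @cons _ m _ hzm q =>
    have hpath := hW ▸ W.bypass_isPath
    rw [cons_isPath_iff] at hpath
    obtain ⟨hzm, hne⟩ := deleteEdges_adj.mp hzm
    refine ⟨m, q.mapLe (deleteEdges_le _), hzm, ?_, (isPath_mapLe _).mpr hpath.1, ?_⟩
    · rintro rfl
      exact hne rfl
    · rw [support_mapLe_eq_support]
      exact hpath.2

theorem Walk.exists_shorter_of_adj {x y u w : V} (q : G.Walk x y)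
    (hu : u ∈ q.support) (hw : w ∈ q.support) (huw : G.Adj u w) (hne : s(u, w) ∉ q.edges) :
    ∃ q' : G.Walk x y, q'.support ⊆ q.support ∧ q'.length < q.length := by
  classical
  induction q with
  | nil => simp_all
  | @cons x z y h p ih =>
    have jump : ∀ t ∈ p.support, G.Adj x t → s(x, t) ∉ (cons h p).edges →
        ∃ q' : G.Walk x y, q'.support ⊆ (cons h p).support ∧
          q'.length < (cons h p).length := by
      intro t ht hxt hnt
      have hzt : z ≠ t := by
        rintro rfl
        simp at hnt
      refine ⟨cons hxt (p.dropUntil t ht), ?_, ?_⟩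
      · simpa using List.cons_subset_cons x (p.support_dropUntil_subset_support ht)
      · have hlen := congr_arg length (p.take_spec ht)
        have hpos : (p.takeUntil t ht).length ≠ 0 := fun h0 => hzt (eq_of_length_eq_zero h0)
        rw [length_append] at hlen
        simp only [length_cons]
        omega
    rw [support_cons, List.mem_cons] at hu hw
    rcases hu with rfl | hu <;> rcases hw with rfl | hw
    · exact absurd huw G.irrefl
    · exact jump w hw huw hne
    · exact jump u hu huw.symm (by rwa [Sym2.eq_swap])
    · obtain ⟨q', hsub, hlt⟩ := ih hu hw (fun h' => hne (by simp [h']))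
      exact ⟨cons h q', List.cons_subset_cons _ hsub, by simpa using hlt⟩

theorem IsChordal.adj_of_walk (hG : G.IsChordal) {a x y : V} (P : G.Walk x y)
    (hxy : x ≠ y) (hax : G.Adj a x) (hay : G.Adj a y) (haP : a ∉ P.support)
    (hP : ∀ w ∈ P.support, G.Adj a w → w = x ∨ w = y) : G.Adj x y := by
  classical
  induction hn : P.length using Nat.strong_induction_on generalizing P with
  | _ n ih =>
  obtain ⟨Q, hQ, hQP, hQn⟩ : ∃ Q : G.Walk x y, Q.IsPath ∧ Q.support ⊆ P.support ∧ Q.length ≤ n :=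
    ⟨P.bypass, P.bypass_isPath, P.support_bypass_subset_support,
      hn ▸ P.length_bypass_le_length⟩
  have haQ : a ∉ Q.support := fun h => haP (hQP h)
  obtain hQ0 | hQ1 | hQ2 : Q.length = 0 ∨ Q.length = 1 ∨ 2 ≤ Q.length := by omega
  · exact absurd (eq_of_length_eq_zero hQ0) hxy
  · exact adj_of_length_eq_one hQ1
  -- Close `Q` into the cycle `y a x ⋯ y`; its chord avoids `a`, so it shortcuts `Q`.
  let C : G.Walk y y := cons hay.symm (cons hax Q)
  have hC : C.IsCycle := by
    rw [cons_isCycle_iff, cons_isPath_iff]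
    refine ⟨⟨hQ, haQ⟩, ?_⟩
    simp only [edges_cons, List.mem_cons, Sym2.eq_iff, not_or]
    exact ⟨⟨fun h => hay.ne' h.1, fun h => hxy h.1.symm⟩,
      fun h => haQ (Q.snd_mem_support_of_mem_edges h)⟩
  obtain ⟨u, w, hu, hw, huw, hne⟩ := hG y C hC (by simp [C]; omega)
  have hchord : ∀ t ∈ C.support, G.Adj a t → s(a, t) ∈ C.edges := by
    intro t ht hat
    have htQ : t ∈ Q.support := by
      simp only [C, support_cons, List.mem_cons] at ht
      rcases ht with rfl | rfl | ht
      · exact Q.end_mem_support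
      · exact absurd hat G.irrefl
      · exact ht
    rcases hP t (hQP htQ) hat with rfl | rfl <;> simp [C, Sym2.eq_swap]
  have hQsupp : ∀ t ∈ C.support, t ≠ a → t ∈ Q.support := by
    intro t ht hta
    simp only [C, support_cons, List.mem_cons] at ht
    rcases ht with rfl | rfl | ht
    exacts [Q.end_mem_support, absurd rfl hta, ht]
  have hua : u ≠ a := by
    rintro rfl
    exact hne (hchord w hw huw)
  have hwa : w ≠ a := by
    rintro rfl
    exact hne (Sym2.eq_swap ▸ hchord u hu huw.symm)
  obtain ⟨Q', hQ'Q, hQ'n⟩ := Q.exists_shorter_of_adj (hQsupp u hu hua) (hQsupp w hw hwa) huw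
    (fun h => hne (by simp [C, h]))
  exact ih _ (by omega) Q' (fun h => haQ (hQ'Q h)) (fun t ht => hP t (hQP (hQ'Q ht))) rfl

theorem exists_walk_avoiding_of_neighborSet_eq_pair {v a b m c : V}
    (hv : G.neighborSet v = {a, b}) (q : G.Walk m c) (hq : q.IsPath) (haq : a ∉ q.support)
    (hm : m = v ∨ m = b) (hcv : c ≠ v) : ∃ Q : G.Walk b c, a ∉ Q.support ∧ v ∉ Q.support := by
  classical
  by_cases hvq : v ∈ q.support
  · -- The step of `q` out of `v` cannot go to `a`, so it goes to `b`.
    obtain ⟨r, hr, har⟩ : ∃ r : G.Walk v c, r.IsPath ∧ a ∉ r.support :=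
      ⟨q.dropUntil v hvq, hq.dropUntil hvq,
        fun h => haq (q.support_dropUntil_subset_support hvq h)⟩
    cases r with
    | nil => exact absurd rfl hcv
    | @cons _ n _ hvn r =>
      rw [cons_isPath_iff] at hr
      rw [support_cons, List.mem_cons, not_or] at har
      rcases (adj_iff_of_neighborSet_eq hv).mp hvn with rfl | rfl
      · exact absurd r.start_mem_support har.2
      · exact ⟨r, har.2, hr.2⟩
  · obtain rfl : m = b := hm.resolve_left (by rintro rfl; exact hvq q.start_mem_support)
    exact ⟨q, haq, hvq⟩

theorem IsChordal.adj_of_neighborSet_eq_pair (hG : G.IsChordal) {v a b : V}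
    (hv : G.neighborSet v = {a, b}) (hab : a ≠ b) (hva : ¬ G.IsBridge s(v, a)) : G.Adj a b := by
  have hadj {w : V} := adj_iff_of_neighborSet_eq (w := w) hv
  obtain ⟨m, q, hvm, hma, hq, hvq⟩ :=
    exists_path_of_not_isBridge (G.ne_of_adj (hadj.mpr (by simp))) hva
  obtain rfl : m = b := by simpa [hma] using hadj.mp hvm
  refine (hG.adj_of_walk q hab.symm hvm (hadj.mpr (by simp)) hvq fun w _ hw => ?_).symm
  simpa [or_comm] using hadj.mp hw

theorem IsChordal.adj_of_neighborSet_eq_insert (hG : G.IsChordal) {v a b c : V}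
    (hv : G.neighborSet v = {a, b}) (ha : G.neighborSet a = insert c {v, b})
    (hc : c ∉ ({v, b} : Set V)) (hac : ¬ G.IsBridge s(a, c)) : G.Adj b c := by
  have hadj {w : V} := adj_iff_of_neighborSet_eq (w := w) ha
  simp only [Set.mem_insert_iff, Set.mem_singleton_iff, not_or] at hc
  obtain ⟨m, q, ham, hmc, hq, haq⟩ :=
    exists_path_of_not_isBridge (G.ne_of_adj (hadj.mpr (by simp))) hac
  obtain ⟨Q, haQ, hvQ⟩ := exists_walk_avoiding_of_neighborSet_eq_pair hv q hq haq
    (by simpa [hmc] using hadj.mp ham) hc.1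
  refine hG.adj_of_walk Q (Ne.symm hc.2) (hadj.mpr (by simp)) (hadj.mpr (by simp)) haQ
    fun w hw haw => ?_
  have hwv : w ≠ v := fun h => hvQ (h ▸ hw)
  simpa [hwv, or_comm] using hadj.mp haw

theorem isBridge_of_triangle_pendant {v a b c : V} (hv : G.neighborSet v = {a, b})
    (ha : G.neighborSet a = {v, b}) (hb : G.neighborSet b = insert c {v, a})
    (hc : c ∉ ({v, a} : Set V)) : G.IsBridge s(b, c) := by
  have hbc : b ≠ c := G.ne_of_adj ((adj_iff_of_neighborSet_eq hb).mpr (by simp))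
  refine isBridge_of_neighborSet_subset (S := {v, a, b}) (by simp) ?_ ?_ ?_
  · simp_all [eq_comm]
  · simp [hv, ha, Set.insert_subset_iff]
  · simp [hb, Set.insert_subset_iff]

theorem isBridge_of_diamond_pendant {v a b c e : V} (hv : G.neighborSet v = {a, b})
    (ha : G.neighborSet a = insert c {v, b}) (hb : G.neighborSet b = insert c {v, a})
    (hc : G.neighborSet c = insert e {a, b}) (he : e ∉ ({a, b} : Set V)) :
    G.IsBridge s(c, e) := by
  have hce : c ≠ e := G.ne_of_adj ((adj_iff_of_neighborSet_eq hc).mpr (by simp))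
  have hev : e ≠ v := by
    rintro rfl
    have hec : G.Adj e c := ((adj_iff_of_neighborSet_eq hc).mpr (by simp)).symm
    rcases (adj_iff_of_neighborSet_eq hv).mp hec with rfl | rfl
    exacts [G.ne_of_adj ((adj_iff_of_neighborSet_eq ha).mpr (by simp)) rfl,
      G.ne_of_adj ((adj_iff_of_neighborSet_eq hb).mpr (by simp)) rfl]
  refine isBridge_of_neighborSet_subset (S := {v, a, b, c}) (by simp) ?_ ?_ ?_
  · simp_all [eq_comm]
  · simp [hv, ha, hb, Set.insert_subset_iff]
  · simp [hc, Set.insert_subset_iff]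

end SimpleGraph

namespace MGraph

variable {V : Type} [DecidableEq V]

theorem ReducesSP.of_stepSP {M N : MGraph V} (h : StepSP M N) (hN : N.ReducesSP) :
    M.ReducesSP :=
  let ⟨H, hNH, hH⟩ := hN
  ⟨H, .head h hNH, hH⟩

theorem reducesSP_triangle {v a b : V} (hva : v ≠ a) (hvb : v ≠ b) (hab : a ≠ b) :
    (⟨{v, a, b}, {s(a, v), s(v, b), s(a, b)}⟩ : MGraph V).ReducesSP := by
  refine .of_stepSP (.suppress _ v a b {s(a, b)} ?_ (by simp) ?_ hva.symm hvb.symm rfl) ?_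
  · exact Finset.two_lt_card.mpr ⟨v, by simp, a, by simp, b, by simp, hva, hvb, hab⟩
  · simp [degree, hva, hvb, hva.symm, hvb.symm]
  refine .of_stepSP (.deleteParallel _ s(a, b) (by simpa using hab) (by simp)) ?_
  exact ⟨_, .refl, a, b, hab, Finset.erase_insert (by simp [hva, hvb]),
    Multiset.erase_cons_head s(a, b) {s(a, b)}⟩

theorem reducesSP_diamond {v a b c : V} (hva : v ≠ a) (hvb : v ≠ b) (hvc : v ≠ c) (hab : a ≠ b)
    (hac : a ≠ c) (hbc : b ≠ c) :
    (⟨{v, c, a, b}, {s(a, v), s(v, b), s(a, c), s(c, b), s(a, b)}⟩ : MGraph V).ReducesSP := by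
  refine .of_stepSP (.suppress _ v a b {s(a, c), s(c, b), s(a, b)} ?_ (by simp) ?_
    hva.symm hvb.symm rfl) ?_
  · exact Finset.two_lt_card.mpr ⟨v, by simp, a, by simp, b, by simp, hva, hvb, hab⟩
  · simp [degree, hva, hvb, hvc, hva.symm, hvb.symm, hvc.symm]
  refine .of_stepSP (.deleteParallel _ s(a, b) (by simpa using hab) ?_) ?_
  · simp [hab, hac, hbc, hac.symm, hbc.symm]
  rw [Finset.erase_insert (by simp [hva, hvb, hvc]), Multiset.erase_cons_head]
  exact reducesSP_triangle hac.symm hbc.symm hab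

end MGraph

namespace SimpleGraph

variable {V : Type} [Fintype V] [DecidableEq V] {G : SimpleGraph V}

theorem toMGraph_eq {s : Finset V} (hs : ∀ x, x ∈ s) {l : List (Sym2 V)} (hl : l.Nodup)
    (hE : ∀ x y, G.Adj x y ↔ s(x, y) ∈ l) : G.toMGraph = ⟨s, l⟩ := by
  rw [toMGraph, MGraph.mk.injEq]
  refine ⟨(Finset.eq_univ_of_forall hs).symm, ?_⟩
  refine (Multiset.Nodup.ext (Finset.nodup _) (Multiset.coe_nodup.mpr hl)).mpr fun e => ?_
  induction e using Sym2.ind with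
  | _ x y => simp [hE]

theorem reducesSP_of_triangle (hG : G.Connected) {v a b : V} (hv : G.neighborSet v = {a, b})
    (ha : G.neighborSet a = {v, b}) (hb : G.neighborSet b = {v, a}) : G.toMGraph.ReducesSP := by
  have hva : v ≠ a := G.ne_of_adj ((adj_iff_of_neighborSet_eq hv).mpr (by simp))
  have hvb : v ≠ b := G.ne_of_adj ((adj_iff_of_neighborSet_eq hv).mpr (by simp))
  have hab : a ≠ b := G.ne_of_adj ((adj_iff_of_neighborSet_eq ha).mpr (by simp))
  have hV (x : V) : x ∈ ({v, a, b} : Finset V) := by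
    simpa using hG.mem_of_neighborSet_subset (S := {v, a, b}) (x := v) (by simp)
      (by simp [hv, ha, hb, Set.insert_subset_iff]) x
  rw [toMGraph_eq hV (l := [s(a, v), s(v, b), s(a, b)]) (by simp [hva, hvb, hab, hva.symm])]
  · exact MGraph.reducesSP_triangle hva hvb hab
  · intro x y
    simp only [Finset.mem_insert, Finset.mem_singleton] at hV
    rcases hV x with rfl | rfl | rfl
    all_goals simp [adj_iff_of_neighborSet_eq hv, adj_iff_of_neighborSet_eq ha,
      adj_iff_of_neighborSet_eq hb, hva, hvb, hab, hva.symm, hvb.symm, hab.symm, eq_comm]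

theorem reducesSP_of_diamond (hG : G.Connected) {v a b c : V} (hvc : v ≠ c)
    (hv : G.neighborSet v = {a, b}) (ha : G.neighborSet a = insert c {v, b})
    (hb : G.neighborSet b = insert c {v, a}) (hc : G.neighborSet c = {a, b}) :
    G.toMGraph.ReducesSP := by
  have hva : v ≠ a := G.ne_of_adj ((adj_iff_of_neighborSet_eq hv).mpr (by simp))
  have hvb : v ≠ b := G.ne_of_adj ((adj_iff_of_neighborSet_eq hv).mpr (by simp))
  have hab : a ≠ b := G.ne_of_adj ((adj_iff_of_neighborSet_eq ha).mpr (by simp))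
  have hac : a ≠ c := G.ne_of_adj ((adj_iff_of_neighborSet_eq ha).mpr (by simp))
  have hbc : b ≠ c := G.ne_of_adj ((adj_iff_of_neighborSet_eq hb).mpr (by simp))
  have hV (x : V) : x ∈ ({v, c, a, b} : Finset V) := by
    simpa using hG.mem_of_neighborSet_subset (S := {v, c, a, b}) (x := v) (by simp)
      (by simp [hv, ha, hb, hc, Set.insert_subset_iff]) x
  rw [toMGraph_eq hV (l := [s(a, v), s(v, b), s(a, c), s(c, b), s(a, b)])
    (by simp [hva, hvb, hvc, hab, hac, hbc, hva.symm, hac.symm, hbc.symm])]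
  · exact MGraph.reducesSP_diamond hva hvb hvc hab hac hbc
  · intro x y
    simp only [Finset.mem_insert, Finset.mem_singleton] at hV
    rcases hV x with rfl | rfl | rfl | rfl
    all_goals simp [adj_iff_of_neighborSet_eq hv, adj_iff_of_neighborSet_eq ha,
      adj_iff_of_neighborSet_eq hb, adj_iff_of_neighborSet_eq hc, hva, hvb, hvc, hab, hac, hbc,
      hva.symm, hvb.symm, hvc.symm, hab.symm, hac.symm, hbc.symm, eq_comm, or_left_comm]

end SimpleGraph

theorem stmt16 {V : Type} [Fintype V] [DecidableEq V] (G : SimpleGraph V)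
    (hconn : G.Connected)
    (hchordal : G.IsChordal)
    (hdeg : ∀ v : V, (G.neighborSet v).ncard = 2 ∨ (G.neighborSet v).ncard = 3)
    (hbridge : ∀ e : Sym2 V, ¬ G.IsBridge e)
    (hdeg2 : ∃ v : V, (G.neighborSet v).ncard = 2) :
    G.toMGraph.ReducesSP := by
  obtain ⟨v, hv2⟩ := hdeg2
  obtain ⟨a, b, hne, hv⟩ := Set.ncard_eq_two.mp hv2
  have hva : G.Adj v a := (SimpleGraph.adj_iff_of_neighborSet_eq hv).mpr (by simp)
  have hvb : G.Adj v b := (SimpleGraph.adj_iff_of_neighborSet_eq hv).mpr (by simp)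
  have hab : G.Adj a b := hchordal.adj_of_neighborSet_eq_pair hv hne (hbridge _)
  rcases Set.eq_pair_or_exists_eq_insert (hdeg a) hva.symm hab hvb.ne with ha | ⟨c, hc, ha⟩
  · rcases Set.eq_pair_or_exists_eq_insert (hdeg b) hvb.symm hab.symm hva.ne
      with hb | ⟨c, hc, hb⟩
    · exact SimpleGraph.reducesSP_of_triangle hconn hv ha hb
    · exact absurd (SimpleGraph.isBridge_of_triangle_pendant hv ha hb hc) (hbridge _)
  have hcv : c ≠ v := fun h => hc (by simp [h])
  have hac : G.Adj a c := (SimpleGraph.adj_iff_of_neighborSet_eq ha).mpr (by simp)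
  have hbc : G.Adj b c := hchordal.adj_of_neighborSet_eq_insert hv ha hc (hbridge _)
  have hb : G.neighborSet b = insert c {v, a} :=
    Set.eq_insert_pair_of_mem (hdeg b) hvb.symm hab.symm hbc hva.ne (by simp [hcv, hac.ne'])
  rcases Set.eq_pair_or_exists_eq_insert (hdeg c) hac.symm hbc.symm hne with hc' | ⟨e, he, hc'⟩
  · exact SimpleGraph.reducesSP_of_diamond hconn hcv.symm hv ha hb hc'
  · exact absurd (SimpleGraph.isBridge_of_diamond_pendant hv ha hb hc' he) (hbridge _)
end

section
/- Let N be a phylogenetic network that is both edgebased and H-connected (i.e., the graph obtained from N by deleting all leaves and their incident edges is Hamilton-connected). Then the leaf-cut graph LCUT(N) has fewer than four vertices. -/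
/-- The vertex set of the leaf-cut graph: all non-leaf vertices. -/
def SimpleGraph.LCUTverts {V : Type} (N : SimpleGraph V) : Set V :=
  {v : V | (N.neighborSet v).ncard ≠ 1}

/-- The leaf-cut graph: `N` with all leaves and their incident edges deleted. -/
def SimpleGraph.LCUT {V : Type} (N : SimpleGraph V) : SimpleGraph N.LCUTverts :=
  N.induce N.LCUTverts

/-!
In a Hamilton-connected graph on at least four vertices every vertex has at least three
neighbours: a vertex `v` whose neighbours all lie in `{x, y}` is an interior vertex of a
Hamiltonian `x`–`y` path, and its two path-neighbours must then be the endpoints, so the path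
is `x v y`. Hence, if `LCUT(N)` had four or more vertices, they would form a nonempty set on
which `N` has minimum degree at least three. No reduction operation removes a vertex of degree
at least three or an edge between two such vertices, so such a set survives every reduction,
whereas `K2` has none.
-/

namespace MGraph

variable {V : Type} [DecidableEq V]

lemma card_filter_adj_le_degree (G : MGraph V) (x : V) (S : Finset V) :
    (S.filter fun y => y ≠ x ∧ s(x, y) ∈ G.edges).card ≤ G.degree x := by
  set f : Sym2 V → ℕ := fun e => if e = s(x, x) then 2 else if x ∈ e then 1 else 0
  set F := S.filter fun y => y ≠ x ∧ s(x, y) ∈ G.edges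
  set incident := G.edges.filter (x ∈ ·)
  have hF : F.val.map (fun y => s(x, y)) ≤ incident := by
    refine (Multiset.le_iff_subset (F.nodup.map fun _ _ h => Sym2.congr_right.mp h)).mpr ?_
    intro e he
    obtain ⟨y, hy, rfl⟩ := Multiset.mem_map.mp he
    exact Multiset.mem_filter.mpr ⟨(Finset.mem_filter.mp hy).2.2, Sym2.mem_mk_left x y⟩
  calc F.card = Multiset.card (F.val.map fun y => s(x, y)) := (Multiset.card_map _ _).symm
    _ ≤ Multiset.card incident := Multiset.card_le_card hF
    _ = (incident.map fun _ => 1).sum := by simp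
    _ ≤ (incident.map f).sum := Multiset.sum_map_le_sum_map _ _ fun e he => by
        have hxe := (Multiset.mem_filter.mp he).2
        simp only [f]; split_ifs <;> simp_all
    _ ≤ G.degree x := by
        rw [degree, ← Multiset.filter_add_not (x ∈ ·) G.edges, Multiset.map_add,
          Multiset.sum_add]
        exact Nat.le_add_right _ _

def HasThreeCore (G : MGraph V) : Prop :=
  ∃ S : Finset V, S.Nonempty ∧ S ⊆ G.verts ∧
    ∀ x ∈ S, 3 ≤ (S.filter fun y => y ≠ x ∧ s(x, y) ∈ G.edges).card

variable {G H : MGraph V} {x y : V}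

lemma Step.mem_verts (h : Step G H) (hx : x ∈ G.verts) (hdeg : 3 ≤ G.degree x) :
    x ∈ H.verts := by
  cases h with
  | deleteLeaf v _ _ _ hv => exact Finset.mem_erase.mpr ⟨by rintro rfl; omega, hx⟩
  | suppress v _ _ _ _ _ hv => exact Finset.mem_erase.mpr ⟨by rintro rfl; omega, hx⟩
  | deleteParallel => exact hx
  | deleteLoop => exact hx

lemma Step.mem_edges (h : Step G H) (hxy : x ≠ y) (he : s(x, y) ∈ G.edges)
    (hx : 3 ≤ G.degree x) (hy : 3 ≤ G.degree y) : s(x, y) ∈ H.edges := by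
  have not_mem {v : V} (hv : G.degree v < 3) : v ∉ s(x, y) := by
    rw [Sym2.mem_iff]; rintro (rfl | rfl) <;> omega
  cases h with
  | deleteLeaf v e _ _ hv _ hve =>
    exact (Multiset.mem_erase_of_ne fun hxe => not_mem (by omega) (hxe ▸ hve)).mpr he
  | suppress v u w rest _ _ hv _ _ hedges =>
    rw [hedges, Multiset.mem_cons, Multiset.mem_cons] at he
    rcases he with he | he | he
    · exact absurd (he ▸ Sym2.mem_mk_right u v) (not_mem (by omega))
    · exact absurd (he ▸ Sym2.mem_mk_left v w) (not_mem (by omega))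
    · exact Multiset.mem_cons_of_mem he
  | deleteParallel e _ hcount =>
    by_cases hxe : s(x, y) = e
    · rw [← Multiset.count_pos, hxe, Multiset.count_erase_self]; omega
    · exact (Multiset.mem_erase_of_ne hxe).mpr he
  | deleteLoop v _ =>
    refine (Multiset.mem_erase_of_ne fun hxv => hxy ?_).mpr he
    simpa using congrArg Sym2.IsDiag hxv

lemma HasThreeCore.of_step (h : Step G H) (hG : G.HasThreeCore) : H.HasThreeCore := by
  obtain ⟨S, hne, hsub, hcore⟩ := hG
  have hdeg : ∀ x ∈ S, 3 ≤ G.degree x :=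
    fun x hx => (hcore x hx).trans (G.card_filter_adj_le_degree x S)
  refine ⟨S, hne, fun x hx => h.mem_verts (hsub hx) (hdeg x hx), fun x hx => ?_⟩
  refine (hcore x hx).trans (Finset.card_le_card fun y hy => ?_)
  obtain ⟨hyS, hyx, hxy⟩ := Finset.mem_filter.mp hy
  exact Finset.mem_filter.mpr
    ⟨hyS, hyx, h.mem_edges (Ne.symm hyx) hxy (hdeg x hx) (hdeg y hyS)⟩

lemma HasThreeCore.of_reflTransGen (h : Relation.ReflTransGen Step G H)
    (hG : G.HasThreeCore) : H.HasThreeCore := by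
  induction h with
  | refl => exact hG
  | tail _ hstep ih => exact ih.of_step hstep

lemma IsK2.not_hasThreeCore (h : G.IsK2) : ¬ G.HasThreeCore := by
  obtain ⟨u, v, -, hverts, -⟩ := h
  rintro ⟨S, ⟨x, hx⟩, hsub, hcore⟩
  have : S.card ≤ 2 := (Finset.card_le_card (hverts ▸ hsub)).trans Finset.card_le_two
  have := (hcore x hx).trans (Finset.card_filter_le _ _)
  omega

lemma Reduces.not_hasThreeCore (h : G.Reduces) : ¬ G.HasThreeCore := by
  obtain ⟨H, hsteps, hK2⟩ := h
  exact fun hG => hK2.not_hasThreeCore (hG.of_reflTransGen hsteps)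

end MGraph

namespace SimpleGraph

variable {V : Type} {G : SimpleGraph V}

lemma Walk.IsPath.length_eq_two_of_neighborSet_subset {x y : V} {p : G.Walk x y}
    (hp : p.IsPath) {i : ℕ} (hi₀ : 0 < i) (hil : i < p.length)
    (hnbr : G.neighborSet (p.getVert i) ⊆ {x, y}) : p.length = 2 := by
  have hinj := hp.getVert_injOn
  have index_eq {j : ℕ} (hj : j ≤ p.length) (hadj : G.Adj (p.getVert i) (p.getVert j)) :
      j = 0 ∨ j = p.length := by
    rcases hnbr hadj with h | h
    · exact .inl (hinj hj (Nat.zero_le _) (h.trans p.getVert_zero.symm))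
    · exact .inr (hinj hj (le_refl p.length) (h.trans p.getVert_length.symm))
  have hprev := index_eq (j := i - 1) (by omega) <| by
    simpa [Nat.sub_add_cancel hi₀] using (p.adj_getVert_succ (i := i - 1) (by omega)).symm
  have hnext := index_eq (j := i + 1) hil (p.adj_getVert_succ hil)
  omega

def IsHamiltonConnected [DecidableEq V] (G : SimpleGraph V) : Prop :=
  ∀ u v : V, u ≠ v → ∃ p : G.Walk u v, p.IsHamiltonian

lemma IsHamiltonConnected.three_le_ncard_neighborSet [DecidableEq V] [Fintype V]
    (hG : G.IsHamiltonConnected) (hcard : 4 ≤ Fintype.card V) (v : V) :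
    3 ≤ (G.neighborSet v).ncard := by
  by_contra! hlt
  obtain ⟨s, hnbr, hsv, hs⟩ := Set.exists_subsuperset_card_eq (t := {v}ᶜ)
    (fun _ h => (G.ne_of_adj h).symm) (by omega : (G.neighborSet v).ncard ≤ 2)
    (by rw [Set.ncard_compl, Set.ncard_singleton, Nat.card_eq_fintype_card]; omega)
  obtain ⟨x, y, hxy, rfl⟩ := Set.ncard_eq_two.mp hs
  obtain ⟨p, hp⟩ := hG x y hxy
  obtain ⟨i, rfl, hi⟩ := Walk.mem_support_iff_exists_getVert.mp (hp.mem_support v)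
  have hi₀ : i ≠ 0 := by rintro rfl; exact hsv (.inl rfl) p.getVert_zero.symm
  have hil : i ≠ p.length := by rintro rfl; exact hsv (.inr rfl) p.getVert_length.symm
  have := hp.isPath.length_eq_two_of_neighborSet_subset (by omega) (by omega) hnbr
  have := hp.length_eq
  omega

section ToMGraph

variable [DecidableEq V] [Fintype V]

lemma mem_toMGraph_edges {x y : V} : s(x, y) ∈ G.toMGraph.edges ↔ G.Adj x y := by
  simp [toMGraph]

lemma hasThreeCore_toMGraph {s : Set V} (hs : s.Nonempty)
    (hdeg : ∀ v : s, 3 ≤ ((G.induce s).neighborSet v).ncard) : G.toMGraph.HasThreeCore := by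
  set S := (Set.toFinite s).toFinset
  refine ⟨S, by simpa [S] using hs, fun _ _ => Finset.mem_univ _, fun x hx => ?_⟩
  have hxs : x ∈ s := by simpa [S] using hx
  have himage : Subtype.val '' (G.induce s).neighborSet ⟨x, hxs⟩ ⊆
      ↑(S.filter fun y => y ≠ x ∧ s(x, y) ∈ G.toMGraph.edges) := by
    rintro _ ⟨y, hy, rfl⟩
    have hadj : G.Adj x y := hy
    simp [S, mem_toMGraph_edges, hadj, hadj.ne.symm]
  calc 3 ≤ ((G.induce s).neighborSet ⟨x, hxs⟩).ncard := hdeg _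
    _ = (Subtype.val '' (G.induce s).neighborSet ⟨x, hxs⟩).ncard :=
        (Set.ncard_image_of_injective _ Subtype.val_injective).symm
    _ ≤ _ := Set.ncard_le_ncard himage (Finset.finite_toSet _)
    _ = _ := Set.ncard_coe_finset _

end ToMGraph

end SimpleGraph

theorem stmt17_general {V : Type} [Fintype V] [DecidableEq V] (N : SimpleGraph V)
    (hedge : N.Edgebased)
    (hH : ∀ u v : N.LCUTverts, u ≠ v → ∃ p : N.LCUT.Walk u v, p.IsHamiltonian) :
    Nat.card N.LCUTverts < 4 := by
  classical
  by_contra! h4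
  obtain ⟨v⟩ := Nat.card_pos_iff.mp (by omega : 0 < Nat.card N.LCUTverts) |>.1
  rw [Nat.card_eq_fintype_card] at h4
  exact hedge.not_hasThreeCore <| N.hasThreeCore_toMGraph ⟨v, v.2⟩
    (SimpleGraph.IsHamiltonConnected.three_le_ncard_neighborSet hH h4)

theorem stmt17 {V : Type} [Fintype V] [DecidableEq V] (N : SimpleGraph V)
    (hconn : N.Connected)
    (hnodeg2 : ∀ v : V, (N.neighborSet v).ncard ≠ 2)
    (hleaves : 2 ≤ {v : V | (N.neighborSet v).ncard = 1}.ncard)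
    (hproper : N.Proper)
    (hedge : N.Edgebased)
    (hH : ∀ u v : N.LCUTverts, u ≠ v → ∃ p : N.LCUT.Walk u v, p.IsHamiltonian) :
    Nat.card N.LCUTverts < 4 :=
  stmt17_general N hedge hH
end
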